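/- arXiv:1312.4971 — 8 statements merged into one kernel-verified Lean document; each statement's English description precedes it below -/
import Mathlib

section
/- Let s ≥ 2 and t ≥ 2 be integers. The complete multipartite graph sK_t, whose vertex set is partitioned into s parts each of size t and in which two vertices are adjacent if and only if they lie in different parts, has metric dimension μ(sK_t) = s(t − 1). -/
open SimpleGraph

/-- `R` is a resolving set for `G`: every pair of distinct vertices is
distinguished by its distances to some vertex of `R`. -/
def IsResolving {V : Type*} (G : SimpleGraph V) (R : Set V) : Prop :=
  ∀ u w : V, u ≠ w → ∃ v ∈ R, G.dist u v ≠ G.dist w v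

/-- The metric dimension of `G`: the least size of a resolving set. -/
noncomputable def metricDim {V : Type*} (G : SimpleGraph V) : ℕ :=
  sInf {n | ∃ R : Set V, IsResolving G R ∧ R.ncard = n}

/-- The complete multipartite graph `s Kₜ` with `s` parts of size `t`:
two vertices are adjacent iff they lie in different parts. -/
def completeMultipartite (s t : ℕ) : SimpleGraph (Fin s × Fin t) :=
  SimpleGraph.fromRel (fun u v => u.1 ≠ v.1)

lemma cm_adj {s t : ℕ} (u v : Fin s × Fin t) :
    (completeMultipartite s t).Adj u v ↔ u.1 ≠ v.1 := by
  constructor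
  · rintro ⟨hne, h | h⟩
    · exact h
    · exact fun he => h he.symm
  · intro h
    exact ⟨fun he => h (by rw [he]), Or.inl h⟩

lemma cm_dist {s t : ℕ} (hs : 2 ≤ s) (u v : Fin s × Fin t) :
    (completeMultipartite s t).dist u v =
      if u = v then 0 else if u.1 = v.1 then 2 else 1 := by
  split_ifs with h1 h2
  · rw [h1, SimpleGraph.dist_self]
  · -- same part, distinct vertices: distance 2
    set i0 : Fin s := ⟨0, by omega⟩ with hi0
    set i1 : Fin s := ⟨1, by omega⟩ with hi1
    set j : Fin s := if u.1 = i0 then i1 else i0 with hj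
    have hju : j ≠ u.1 := by
      rw [hj]
      split_ifs with h
      · rw [h]; intro he; exact absurd (congrArg Fin.val he) (by simp [hi0, hi1])
      · exact fun he => h he.symm
    set w : Fin s × Fin t := (j, u.2) with hw
    have hadj1 : (completeMultipartite s t).Adj u w := (cm_adj u w).2 (Ne.symm hju)
    have hadj2 : (completeMultipartite s t).Adj w v := (cm_adj w v).2 (by rw [← h2]; exact hju)
    have hle : (completeMultipartite s t).dist u v ≤ 2 := by
      have := SimpleGraph.dist_le (hadj1.toWalk.append hadj2.toWalk)
      simpa using this
    have hpos : 0 < (completeMultipartite s t).dist u v := by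
      have hr : (completeMultipartite s t).Reachable u v :=
        ⟨hadj1.toWalk.append hadj2.toWalk⟩
      exact hr.pos_dist_of_ne h1
    have hne1 : (completeMultipartite s t).dist u v ≠ 1 := by
      intro h
      exact ((cm_adj u v).1 (SimpleGraph.dist_eq_one_iff_adj.mp h)) h2
    omega
  · exact SimpleGraph.dist_eq_one_iff_adj.mpr ((cm_adj u v).2 h2)

/-- For `s, t ≥ 2`, the metric dimension of `s Kₜ` is `s (t - 1)`. -/
theorem stmt2 (s t : ℕ) (hs : 2 ≤ s) (ht : 2 ≤ t) :
    metricDim (completeMultipartite s t) = s * (t - 1) := by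
  have ht0 : 0 < t := by omega
  have card_univ : Nat.card (Fin s × Fin t) = s * t := by
    simp [Nat.card_eq_fintype_card]
  set G := completeMultipartite s t with hG
  set z : Fin t := ⟨0, ht0⟩ with hz
  set R : Set (Fin s × Fin t) := {v | v.2 ≠ z} with hR
  have hRcompl : Rᶜ = Set.range (fun i : Fin s => (i, z)) := by
    ext v
    simp only [hR, Set.mem_compl_iff, Set.mem_setOf_eq, not_not, Set.mem_range]
    constructor
    · intro h; exact ⟨v.1, by rw [← h]⟩
    · rintro ⟨i, rfl⟩; rfl
  have hRcard : R.ncard = s * (t - 1) := by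
    have hcompl : Rᶜ.ncard = s := by
      rw [hRcompl, ← Nat.card_coe_set_eq,
        Nat.card_range_of_injective (f := fun i : Fin s => (i, z))
          (fun a b h => by simpa using congrArg Prod.fst h)]
      simp [Nat.card_eq_fintype_card]
    have h := Set.ncard_add_ncard_compl R
    rw [hcompl, card_univ] at h
    have h2 : R.ncard = s * t - s := by omega
    rw [h2, Nat.mul_sub, mul_one]
  have hRres : IsResolving G R := by
    intro u w huw
    by_cases hu : u ∈ R
    · refine ⟨u, hu, ?_⟩
      rw [hG, cm_dist hs, cm_dist hs, if_pos rfl, if_neg huw.symm]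
      split_ifs <;> omega
    · simp only [hR, Set.mem_setOf_eq, not_not] at hu
      by_cases hw : w ∈ R
      · refine ⟨w, hw, ?_⟩
        rw [hG, cm_dist hs, cm_dist hs, if_pos rfl, if_neg huw]
        split_ifs <;> omega
      · simp only [hR, Set.mem_setOf_eq, not_not] at hw
        have hpart : u.1 ≠ w.1 := by
          intro h
          exact huw (Prod.ext h (hu.trans hw.symm))
        set v : Fin s × Fin t := (u.1, ⟨1, by omega⟩) with hv
        have hvR : v ∈ R := by
          simp only [hR, Set.mem_setOf_eq, hv, hz]
          intro h
          simpa using congrArg Fin.val h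
        refine ⟨v, hvR, ?_⟩
        have huv : u ≠ v := by
          intro h
          have := congrArg (fun p : Fin s × Fin t => (p.2 : ℕ)) h
          simp [hv, hu, hz] at this
        have hwv : w ≠ v := fun h => hpart (by rw [h])
        rw [hG, cm_dist hs, cm_dist hs, if_neg huv, if_neg hwv,
          if_pos (show u.1 = v.1 from rfl),
          if_neg (show ¬ w.1 = v.1 from fun h => hpart (by rw [h]))]
        omega
  have hub : metricDim G ≤ s * (t - 1) :=
    Nat.sInf_le ⟨R, hRres, hRcard⟩
  have hlb : ∀ n ∈ {n | ∃ Q : Set (Fin s × Fin t), IsResolving G Q ∧ Q.ncard = n},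
      s * (t - 1) ≤ n := by
    rintro n ⟨Q, hQres, rfl⟩
    have hinj : Set.InjOn (fun v : Fin s × Fin t => v.1) Qᶜ := by
      intro u hu w hw h
      by_contra hne
      obtain ⟨v, hvQ, hdist⟩ := hQres u w hne
      apply hdist
      have hvu : u ≠ v := fun he => hu (he ▸ hvQ)
      have hvw : w ≠ v := fun he => hw (he ▸ hvQ)
      rw [hG, cm_dist hs, cm_dist hs, if_neg hvu, if_neg hvw, show u.1 = w.1 from h]
    have hcompl : Qᶜ.ncard ≤ s := by
      have h1 := Set.ncard_le_ncard (Set.image_subset_range (fun v : Fin s × Fin t => v.1) Qᶜ)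
        (Set.toFinite _)
      rw [Set.ncard_image_of_injOn hinj] at h1
      calc Qᶜ.ncard ≤ (Set.range (fun v : Fin s × Fin t => v.1)).ncard := h1
        _ ≤ (Set.univ : Set (Fin s)).ncard :=
            Set.ncard_le_ncard (Set.subset_univ _) (Set.toFinite _)
        _ = s := by simp [Set.ncard_univ, Nat.card_eq_fintype_card]
    have h := Set.ncard_add_ncard_compl Q
    rw [card_univ] at h
    have h1 : s * (t - 1) = s * t - s := by rw [Nat.mul_sub, mul_one]
    have h2 : s ≤ s * t := Nat.le_mul_of_pos_right s ht0
    omega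
  exact le_antisymm hub (le_csInf ⟨s * (t - 1), R, hRres, hRcard⟩ hlb)
end

section
/- Let Γ = (V,E) be an (r+1)-antipodal distance-regular graph of diameter d with folded graph Γ̄ = (V̄,Ē), and let V = V⁰ ∪ V¹ ∪ ⋯ ∪ V^r be an (r+1)-antipodal partition of V; for v ∈ V̄ write v^i for the unique representative of the antipodal class v lying in V^i. Let R̄ be a resolving set for Γ̄ and set R = { w^ℓ : w ∈ R̄, 1 ≤ ℓ ≤ r }. Then for any vertices u^i, v^j ∈ V with u, v ∈ V̄, i, j ∈ {0,1,…,r} and u ≠ v, there exists w^ℓ ∈ R (with w ∈ R̄ and ℓ ∈ {1,…,r}) such that d_Γ(u^i, w^ℓ) ≠ d_Γ(v^j, w^ℓ). -/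
open SimpleGraph

/-- `G` has diameter `d`. -/
def HasDiam {V : Type*} (G : SimpleGraph V) (d : ℕ) : Prop :=
  (∀ u w : V, G.dist u w ≤ d) ∧ ∃ u w : V, G.dist u w = d

/-- `G` is distance-regular: there are parameters `cᵢ, aᵢ, bᵢ` such that for any
vertices `u, w` at distance `i`, the number of neighbours of `w` at distance
`i-1`, `i`, `i+1` from `u` is `cᵢ`, `aᵢ`, `bᵢ` respectively. -/
def IsDistRegular {V : Type*} (G : SimpleGraph V) : Prop :=
  ∃ c a b : ℕ → ℕ, ∀ (i : ℕ) (u w : V), G.dist u w = i →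
    {x | G.Adj w x ∧ G.dist u x = i - 1}.ncard = c i ∧
    {x | G.Adj w x ∧ G.dist u x = i}.ncard = a i ∧
    {x | G.Adj w x ∧ G.dist u x = i + 1}.ncard = b i

/-- The folded graph of a graph on `Vb × Fin t` whose antipodal classes are the
fibres `{v} × Fin t`: two classes are adjacent iff they contain adjacent vertices. -/
def folded {Vb : Type*} {t : ℕ} (G : SimpleGraph (Vb × Fin t)) : SimpleGraph Vb :=
  SimpleGraph.fromRel (fun u v => ∃ i j : Fin t, G.Adj (u, i) (v, j))

section StmtAux

variable {Vb : Type*} [Fintype Vb] {r d : ℕ} {G : SimpleGraph (Vb × Fin (r + 1))}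

/-- Penultimate vertex of a geodesic. -/
lemma aux_penult (hconn : G.Connected) {x y : Vb × Fin (r + 1)} {n : ℕ}
    (h : G.dist x y = n) (hn : 0 < n) : ∃ z, G.Adj y z ∧ G.dist x z = n - 1 := by
  obtain ⟨p, hp⟩ := (hconn x y).exists_walk_length_eq_dist
  have hxy : y ≠ x := by rintro rfl; rw [SimpleGraph.dist_self] at h; omega
  obtain ⟨z, hadj, q, hq⟩ := SimpleGraph.Walk.exists_eq_cons_of_ne hxy p.reverse
  have hlen : q.length = n - 1 := by
    have := congrArg SimpleGraph.Walk.length hq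
    rw [SimpleGraph.Walk.length_reverse, hp, h, SimpleGraph.Walk.length_cons] at this
    omega
  refine ⟨z, hadj, le_antisymm ?_ ?_⟩
  · calc G.dist x z ≤ q.reverse.length := SimpleGraph.dist_le _
      _ = n - 1 := by rw [SimpleGraph.Walk.length_reverse, hlen]
  · have h1 : G.dist z y = 1 := SimpleGraph.dist_eq_one_iff_adj.mpr hadj.symm
    have h2 : G.dist x y ≤ G.dist x z + G.dist z y := hconn.dist_triangle
    omega

/-- In a distance-regular graph of diameter `d`, any vertex at distance `m < d`
from `x` has a neighbour at distance `m + 1` from `x` (since `bₘ ≥ 1`). -/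
lemma aux_upext (hconn : G.Connected) (hdr : IsDistRegular G) (hdiam : HasDiam G d)
    {m : ℕ} (hm : m < d) :
    ∀ x y : Vb × Fin (r + 1), G.dist x y = m →
      ∃ z, G.Adj y z ∧ G.dist x z = m + 1 := by
  obtain ⟨c, a, b, hb⟩ := hdr
  obtain ⟨hled, x0, y0, hd0⟩ := hdiam
  have pairs : ∀ k, k ≤ d → ∃ x y : Vb × Fin (r + 1), G.dist x y = d - k := by
    intro k
    induction k with
    | zero => intro _; exact ⟨x0, y0, by simpa using hd0⟩
    | succ k ih =>
      intro hk
      obtain ⟨x, y, hxy⟩ := ih (by omega)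
      obtain ⟨z, _, hz⟩ := aux_penult hconn hxy (by omega)
      exact ⟨x, z, by rw [hz]; omega⟩
  obtain ⟨x1, y1, h1⟩ := pairs (d - (m + 1)) (by omega)
  have h1' : G.dist x1 y1 = m + 1 := by omega
  obtain ⟨z1, hadj1, hz1⟩ := aux_penult hconn h1' (by omega)
  have hz1' : G.dist x1 z1 = m := by omega
  have hb1 := (hb m x1 z1 hz1').2.2
  have hbm : 0 < b m := by
    rw [← hb1]
    exact (Set.ncard_pos (Set.toFinite _)).mpr ⟨y1, hadj1.symm, h1'⟩
  intro x y hxy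
  have h2 := (hb m x y hxy).2.2
  have hne : {z | G.Adj y z ∧ G.dist x z = m + 1}.Nonempty := by
    apply Set.nonempty_of_ncard_ne_zero; rw [h2]; omega
  obtain ⟨z, hz⟩ := hne
  exact ⟨z, hz.1, hz.2⟩

/-- Geodesic extension: any geodesic can be extended to length `d`. -/
lemma aux_ext (hconn : G.Connected) (hdr : IsDistRegular G) (hdiam : HasDiam G d) :
    ∀ (n : ℕ) (x y : Vb × Fin (r + 1)), G.dist x y + n = d →
      ∃ z, G.dist x z = d ∧ G.dist y z = n := by
  intro n
  induction n with
  | zero =>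
    intro x y h
    exact ⟨y, by omega, by rw [SimpleGraph.dist_self]⟩
  | succ n ih =>
    intro x y h
    obtain ⟨y1, hadj, hy1⟩ :=
      aux_upext hconn hdr hdiam (m := G.dist x y) (by omega) x y rfl
    obtain ⟨z, hz1, hz2⟩ := ih x y1 (by omega)
    refine ⟨z, hz1, le_antisymm ?_ ?_⟩
    · have t1 : G.dist y z ≤ G.dist y y1 + G.dist y1 z := hconn.dist_triangle
      have t2 : G.dist y y1 = 1 := SimpleGraph.dist_eq_one_iff_adj.mpr hadj
      omega
    · have t3 : G.dist x z ≤ G.dist x y + G.dist y z := hconn.dist_triangle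
      omega

/-- Two distinct vertices in the same fibre are at distance `d`. -/
lemma aux_fibre_d (hconn : G.Connected)
    (hant : ∀ x y : Vb × Fin (r + 1), (G.dist x y = 0 ∨ G.dist x y = d) ↔ x.1 = y.1)
    {x y : Vb × Fin (r + 1)} (h1 : x.1 = y.1) (h2 : x ≠ y) : G.dist x y = d := by
  rcases (hant x y).mpr h1 with h | h
  · exact absurd (hconn.dist_eq_zero_iff.mp h) h2
  · exact h

/-- Vertices in different fibres are at distance strictly between `0` and `d`. -/
lemma aux_diff (hdiam : HasDiam G d)
    (hant : ∀ x y : Vb × Fin (r + 1), (G.dist x y = 0 ∨ G.dist x y = d) ↔ x.1 = y.1)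
    {x y : Vb × Fin (r + 1)} (h : x.1 ≠ y.1) :
    0 < G.dist x y ∧ G.dist x y < d := by
  have h1 : ¬(G.dist x y = 0 ∨ G.dist x y = d) := fun hc => h ((hant x y).mp hc)
  have h2 := hdiam.1 x y
  omega

end StmtAux

/-- The minimum distance from a vertex to a fibre. -/
noncomputable def stmtKmin {Vb : Type*} {r : ℕ} (G : SimpleGraph (Vb × Fin (r + 1)))
    (a : Vb × Fin (r + 1)) (w : Vb) : ℕ :=
  Finset.univ.inf' Finset.univ_nonempty (fun ℓ => G.dist a (w, ℓ))

section StmtAux2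

variable {Vb : Type*} [Fintype Vb] {r d : ℕ} {G : SimpleGraph (Vb × Fin (r + 1))}

lemma stmtKmin_le {a : Vb × Fin (r + 1)} {w : Vb} (ℓ : Fin (r + 1)) :
    stmtKmin G a w ≤ G.dist a (w, ℓ) :=
  Finset.inf'_le _ (Finset.mem_univ _)

lemma stmtKmin_attained (a : Vb × Fin (r + 1)) (w : Vb) :
    ∃ ℓ, G.dist a (w, ℓ) = stmtKmin G a w := by
  obtain ⟨ℓ, -, h⟩ :=
    Finset.exists_mem_eq_inf' (Finset.univ_nonempty) (fun ℓ => G.dist a (w, ℓ))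
  exact ⟨ℓ, h.symm⟩

/-- The distances from a vertex to a fibre (of a different base point) take
exactly the two values `k` and `d - k`, with `2k ≤ d`, where `k` is the minimum. -/
lemma aux_rowA (hconn : G.Connected) (hdr : IsDistRegular G) (hdiam : HasDiam G d)
    (hant : ∀ x y : Vb × Fin (r + 1), (G.dist x y = 0 ∨ G.dist x y = d) ↔ x.1 = y.1)
    (hr : 1 ≤ r) {a : Vb × Fin (r + 1)} {w : Vb} (ha : a.1 ≠ w) :
    0 < stmtKmin G a w ∧ 2 * stmtKmin G a w ≤ d ∧
      ∀ ℓ, G.dist a (w, ℓ) = stmtKmin G a w ∨ G.dist a (w, ℓ) = d - stmtKmin G a w := by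
  obtain ⟨ℓ0, hℓ0⟩ := stmtKmin_attained (G := G) a w
  have hpos : 0 < stmtKmin G a w := by
    have := (aux_diff hdiam hant (x := a) (y := (w, ℓ0)) ha).1
    omega
  have key : ∀ ℓ, ℓ ≠ ℓ0 → G.dist a (w, ℓ) = d - stmtKmin G a w := by
    intro ℓ hℓ
    have hdle := hdiam.1 a (w, ℓ)
    have hcomm : G.dist (w, ℓ) a = G.dist a (w, ℓ) := SimpleGraph.dist_comm
    have hle : G.dist a (w, ℓ) ≤ d - stmtKmin G a w := by
      obtain ⟨z, hz1, hz2⟩ :=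
        aux_ext hconn hdr hdiam (d - G.dist a (w, ℓ)) (w, ℓ) a (by omega)
      have hz3 : z.1 = w := ((hant (w, ℓ) z).mp (Or.inr hz1)).symm
      have hz4 : stmtKmin G a w ≤ G.dist a (w, z.2) := stmtKmin_le _
      have hz5 : G.dist a (w, z.2) = d - G.dist a (w, ℓ) := by
        have hzz : (w, z.2) = z := Prod.ext hz3.symm rfl
        rw [hzz]; exact hz2
      omega
    have hne2 : (w, ℓ) ≠ ((w, ℓ0) : Vb × Fin (r + 1)) := by
      intro hc; exact hℓ (congrArg Prod.snd hc)
    have hD : G.dist (w, ℓ) (w, ℓ0) = d := aux_fibre_d hconn hant rfl hne2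
    have tri : G.dist (w, ℓ) (w, ℓ0) ≤ G.dist (w, ℓ) a + G.dist a (w, ℓ0) :=
      hconn.dist_triangle
    omega
  have hx : ∃ ℓ : Fin (r + 1), ℓ ≠ ℓ0 := by
    have : Nontrivial (Fin (r + 1)) := by
      rw [Fin.nontrivial_iff_two_le]; omega
    exact exists_ne ℓ0
  obtain ⟨ℓ', hℓ'⟩ := hx
  have h1 := key ℓ' hℓ'
  have h2 := stmtKmin_le (G := G) (a := a) (w := w) ℓ'
  have h3 := hdiam.1 a (w, ℓ')
  refine ⟨hpos, by omega, ?_⟩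
  intro ℓ
  by_cases hc : ℓ = ℓ0
  · subst hc; exact Or.inl hℓ0
  · exact Or.inr (key ℓ hc)

/-- The minimum distance to a fibre does not depend on which vertex of the
fibre of `u` we start from. -/
lemma aux_kmin_indep (hconn : G.Connected) (hdr : IsDistRegular G) (hdiam : HasDiam G d)
    (hant : ∀ x y : Vb × Fin (r + 1), (G.dist x y = 0 ∨ G.dist x y = d) ↔ x.1 = y.1)
    (hr : 1 ≤ r) {u w : Vb} (huw : u ≠ w) (i i' : Fin (r + 1)) :
    stmtKmin G (u, i) w = stmtKmin G (u, i') w := by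
  obtain ⟨i0, -, hi0⟩ := Finset.exists_min_image Finset.univ
    (fun i => stmtKmin G (u, i) w) Finset.univ_nonempty
  obtain ⟨ℓ0, hℓ0⟩ := stmtKmin_attained (G := G) (u, i0) w
  have hcol_le : stmtKmin G (w, ℓ0) u ≤ stmtKmin G (u, i0) w := by
    have h1 := stmtKmin_le (G := G) (a := (w, ℓ0)) (w := u) i0
    have h2 : G.dist (w, ℓ0) (u, i0) = G.dist (u, i0) (w, ℓ0) := SimpleGraph.dist_comm
    omega
  have hcol_ge : stmtKmin G (u, i0) w ≤ stmtKmin G (w, ℓ0) u := by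
    obtain ⟨i1, hi1⟩ := stmtKmin_attained (G := G) (w, ℓ0) u
    have h1 := stmtKmin_le (G := G) (a := (u, i1)) (w := w) ℓ0
    have h2 := hi0 i1 (Finset.mem_univ _)
    have h3 : G.dist (w, ℓ0) (u, i1) = G.dist (u, i1) (w, ℓ0) := SimpleGraph.dist_comm
    omega
  have hcolK : stmtKmin G (w, ℓ0) u = stmtKmin G (u, i0) w :=
    le_antisymm hcol_le hcol_ge
  suffices hall : ∀ i, stmtKmin G (u, i) w = stmtKmin G (u, i0) w by
    rw [hall i, hall i']
  intro i
  have hrowi := aux_rowA hconn hdr hdiam hant hr (a := (u, i)) (w := w) huw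
  have hcol := aux_rowA hconn hdr hdiam hant hr (a := (w, ℓ0)) (w := u) (Ne.symm huw)
  have hM1 := hrowi.2.2 ℓ0
  have hM2 := hcol.2.2 i
  have hc : G.dist (w, ℓ0) (u, i) = G.dist (u, i) (w, ℓ0) := SimpleGraph.dist_comm
  rw [hc, hcolK] at hM2
  have h2 := hi0 i (Finset.mem_univ _)
  have hKi2 := hrowi.2.1
  have hK2 := hcol.2.1
  rw [hcolK] at hK2
  omega

/-- Adjacency projects to the folded graph (when `d ≥ 2`). -/
lemma aux_fold_adj (hconn : G.Connected)
    (hant : ∀ x y : Vb × Fin (r + 1), (G.dist x y = 0 ∨ G.dist x y = d) ↔ x.1 = y.1)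
    (hd : 2 ≤ d) {x y : Vb × Fin (r + 1)} (hxy : G.Adj x y) :
    (folded G).Adj x.1 y.1 := by
  have hne : x.1 ≠ y.1 := by
    intro hc
    have hD : G.dist x y = d := aux_fibre_d hconn hant hc hxy.ne
    have h1 : G.dist x y = 1 := SimpleGraph.dist_eq_one_iff_adj.mpr hxy
    omega
  simp only [folded, SimpleGraph.fromRel_adj]
  exact ⟨hne, Or.inl ⟨x.2, y.2, by simpa using hxy⟩⟩

/-- The projection onto the first coordinate as a graph homomorphism. -/
def auxHom (hconn : G.Connected)
    (hant : ∀ x y : Vb × Fin (r + 1), (G.dist x y = 0 ∨ G.dist x y = d) ↔ x.1 = y.1)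
    (hd : 2 ≤ d) : G →g folded G :=
  ⟨Prod.fst, fun h => aux_fold_adj hconn hant hd h⟩

/-- The folded distance is at most any lifted distance. -/
lemma aux_fold_dist_le (hconn : G.Connected)
    (hant : ∀ x y : Vb × Fin (r + 1), (G.dist x y = 0 ∨ G.dist x y = d) ↔ x.1 = y.1)
    (hd : 2 ≤ d) (a b : Vb × Fin (r + 1)) :
    (folded G).dist a.1 b.1 ≤ G.dist a b := by
  obtain ⟨p, hp⟩ := (hconn a b).exists_walk_length_eq_dist
  calc (folded G).dist a.1 b.1 ≤ (p.map (auxHom hconn hant hd)).length :=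
        SimpleGraph.dist_le (p.map (auxHom hconn hant hd))
    _ = p.length := SimpleGraph.Walk.length_map _ _
    _ = G.dist a b := hp

lemma aux_fold_reach (hconn : G.Connected)
    (hant : ∀ x y : Vb × Fin (r + 1), (G.dist x y = 0 ∨ G.dist x y = d) ↔ x.1 = y.1)
    (hd : 2 ≤ d) (u w : Vb) : (folded G).Reachable u w :=
  (hconn ((u, 0) : Vb × Fin (r + 1)) (w, 0)).map (auxHom hconn hant hd)

/-- Walks in the folded graph lift to walks in `G` of the same length from
a suitable representative. -/
lemma aux_lift (hconn : G.Connected) (hdr : IsDistRegular G) (hdiam : HasDiam G d)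
    (hant : ∀ x y : Vb × Fin (r + 1), (G.dist x y = 0 ∨ G.dist x y = d) ↔ x.1 = y.1)
    (hr : 1 ≤ r) {w : Vb} :
    ∀ {u : Vb} (p : (folded G).Walk u w), u ≠ w →
      ∃ a ℓ, G.dist (u, a) (w, ℓ) ≤ p.length := by
  intro u p
  induction p with
  | nil => intro h; exact absurd rfl h
  | @cons u u1 w h q ih =>
    intro _
    have h' := h
    simp only [folded, SimpleGraph.fromRel_adj] at h'
    have huu1 : u ≠ u1 := h'.1
    have hadj : ∃ b c, G.Adj (u, b) (u1, c) := by
      rcases h'.2 with ⟨b, c, hbc⟩ | ⟨b, c, hbc⟩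
      · exact ⟨b, c, hbc⟩
      · exact ⟨c, b, hbc.symm⟩
    obtain ⟨b, c, hbc⟩ := hadj
    by_cases h1 : u1 = w
    · rw [h1] at hbc
      refine ⟨b, c, ?_⟩
      have hone : G.dist (u, b) (w, c) = 1 := SimpleGraph.dist_eq_one_iff_adj.mpr hbc
      rw [SimpleGraph.Walk.length_cons]
      omega
    · obtain ⟨a1, ℓ1, h2⟩ := ih h1
      have e1 : stmtKmin G (u1, a1) u = stmtKmin G (u1, c) u :=
        aux_kmin_indep hconn hdr hdiam hant hr (Ne.symm huu1) a1 c
      have e2 : stmtKmin G (u1, c) u ≤ 1 := by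
        have h3 := stmtKmin_le (G := G) (a := (u1, c)) (w := u) b
        have h4 : G.dist (u1, c) (u, b) = 1 := SimpleGraph.dist_eq_one_iff_adj.mpr hbc.symm
        omega
      have e3 : 0 < stmtKmin G (u1, a1) u := by
        obtain ⟨ℓa, hℓa⟩ := stmtKmin_attained (G := G) (u1, a1) u
        have := (aux_diff hdiam hant (x := ((u1, a1) : Vb × Fin (r + 1)))
          (y := (u, ℓa)) (Ne.symm huu1)).1
        omega
      obtain ⟨b1, hb1⟩ := stmtKmin_attained (G := G) (u1, a1) u
      refine ⟨b1, ℓ1, ?_⟩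
      have tri : G.dist (u, b1) (w, ℓ1) ≤ G.dist (u, b1) (u1, a1) + G.dist (u1, a1) (w, ℓ1) :=
        hconn.dist_triangle
      have hcomm : G.dist (u, b1) (u1, a1) = G.dist (u1, a1) (u, b1) := SimpleGraph.dist_comm
      rw [SimpleGraph.Walk.length_cons]
      omega

/-- The minimum distance to a fibre equals the folded distance. -/
lemma aux_kmin_eq (hconn : G.Connected) (hdr : IsDistRegular G) (hdiam : HasDiam G d)
    (hant : ∀ x y : Vb × Fin (r + 1), (G.dist x y = 0 ∨ G.dist x y = d) ↔ x.1 = y.1)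
    (hr : 1 ≤ r) (hd : 2 ≤ d) {u w : Vb} (huw : u ≠ w) (i : Fin (r + 1)) :
    stmtKmin G (u, i) w = (folded G).dist u w := by
  apply le_antisymm
  · obtain ⟨p, hp⟩ := (aux_fold_reach hconn hant hd u w).exists_walk_length_eq_dist
    obtain ⟨a, ℓ, hal⟩ := aux_lift hconn hdr hdiam hant hr p huw
    have h1 := aux_kmin_indep hconn hdr hdiam hant hr huw i a
    have h2 := stmtKmin_le (G := G) (a := ((u, a) : Vb × Fin (r + 1))) (w := w) ℓ
    omega
  · obtain ⟨ℓ, hℓ⟩ := stmtKmin_attained (G := G) (u, i) w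
    have h1 : (folded G).dist u w ≤ G.dist (u, i) (w, ℓ) :=
      aux_fold_dist_le hconn hant hd (u, i) (w, ℓ)
    omega

end StmtAux2

/-- Let `G` be an `(r+1)`-antipodal distance-regular graph of diameter `d`,
presented on vertex set `Vb × Fin (r+1)` so that the antipodal classes are exactly the
fibres `{v} × Fin (r+1)` (so the sets `Vb × {i}` form an `(r+1)`-antipodal partition),
with folded graph `folded G` on `Vb`.  If `R̄` is a resolving set for the folded graph
and `u ≠ v` in `V̄`, then for any `i, j` some vertex `(w, ℓ)` with `w ∈ R̄` and `ℓ ≠ 0`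
resolves `(u, i)` and `(v, j)`. -/
theorem stmt4 {Vb : Type*} [Fintype Vb] (r d : ℕ)
    (G : SimpleGraph (Vb × Fin (r + 1)))
    (hconn : G.Connected) (hdr : IsDistRegular G) (hdiam : HasDiam G d)
    (hant : ∀ x y : Vb × Fin (r + 1), (G.dist x y = 0 ∨ G.dist x y = d) ↔ x.1 = y.1)
    (Rb : Set Vb) (hRb : IsResolving (folded G) Rb)
    (u v : Vb) (huv : u ≠ v) (i j : Fin (r + 1)) :
    ∃ w ∈ Rb, ∃ ℓ : Fin (r + 1), ℓ ≠ 0 ∧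
      G.dist (u, i) (w, ℓ) ≠ G.dist (v, j) (w, ℓ) := by
  classical
  -- degenerate case r = 0
  rcases Nat.eq_zero_or_pos r with hr0 | hr
  · exfalso
    subst hr0
    obtain ⟨x, y, hxy⟩ := hdiam.2
    have hb : x.1 = y.1 := (hant x y).mp (Or.inr hxy)
    have hxy2 : x.2 = y.2 := by
      have h1 := x.2.isLt
      have h2 := y.2.isLt
      exact Fin.ext (by omega)
    have hxey : x = y := Prod.ext hb hxy2
    rw [hxey, SimpleGraph.dist_self] at hxy
    have h0 : G.dist (u, i) (v, j) = 0 := by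
      have := hdiam.1 (u, i) (v, j); omega
    exact huv ((hant (u, i) (v, j)).mp (Or.inl h0))
  -- degenerate case d ≤ 1
  rcases Nat.lt_or_ge d 2 with hd | hd
  · exfalso
    have h1 := hdiam.1 (u, i) (v, j)
    have h2 : G.dist (u, i) (v, j) = 0 ∨ G.dist (u, i) (v, j) = d := by omega
    exact huv ((hant (u, i) (v, j)).mp h2)
  -- main case
  obtain ⟨w, hwR, hwd⟩ := hRb u v huv
  have hℓ1lt : 1 < r + 1 := by omega
  set ℓ1 : Fin (r + 1) := ⟨1, hℓ1lt⟩ with hℓ1def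
  have hℓ1 : ℓ1 ≠ 0 := by
    intro hc
    have := congrArg Fin.val hc
    simp [hℓ1def] at this
  by_cases hwu : w = u
  · subst hwu
    refine ⟨w, hwR, ℓ1, hℓ1, ?_⟩
    have hv := aux_diff hdiam hant (x := ((v, j) : Vb × Fin (r + 1)))
      (y := (w, ℓ1)) (by exact fun hc => huv hc.symm)
    by_cases hi : i = ℓ1
    · subst hi
      rw [SimpleGraph.dist_self]
      omega
    · have hD : G.dist (w, i) (w, ℓ1) = d :=
        aux_fibre_d hconn hant rfl (fun hc => hi (congrArg Prod.snd hc))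
      omega
  by_cases hwv : w = v
  · subst hwv
    refine ⟨w, hwR, ℓ1, hℓ1, ?_⟩
    have hu := aux_diff hdiam hant (x := ((u, i) : Vb × Fin (r + 1)))
      (y := (w, ℓ1)) (by exact fun hc => huv hc)
    by_cases hj : j = ℓ1
    · subst hj
      rw [SimpleGraph.dist_self (G := G) (v := ((w, ℓ1) : Vb × Fin (r + 1)))]
      omega
    · have hD : G.dist (w, j) (w, ℓ1) = d :=
        aux_fibre_d hconn hant rfl (fun hc => hj (congrArg Prod.snd hc))
      omega
  · -- w distinct from both u and v
    have huw : u ≠ w := fun hc => hwu hc.symm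
    have hvw : v ≠ w := fun hc => hwv hc.symm
    have hKu := aux_kmin_eq hconn hdr hdiam hant hr hd huw i
    have hKv := aux_kmin_eq hconn hdr hdiam hant hr hd hvw j
    have hrowu := aux_rowA hconn hdr hdiam hant hr
      (a := ((u, i) : Vb × Fin (r + 1))) (w := w) huw
    have hrowv := aux_rowA hconn hdr hdiam hant hr
      (a := ((v, j) : Vb × Fin (r + 1))) (w := w) hvw
    refine ⟨w, hwR, ℓ1, hℓ1, ?_⟩
    have hAu := hrowu.2.2 ℓ1
    have hAv := hrowv.2.2 ℓ1
    have h1 := hrowu.1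
    have h2 := hrowu.2.1
    have h3 := hrowv.1
    have h4 := hrowv.2.1
    have hne : stmtKmin G (u, i) w ≠ stmtKmin G (v, j) w := by
      rw [hKu, hKv]; exact hwd
    omega
end

section
/- Let Γ = (V,E) be an (r+1)-antipodal distance-regular graph of even diameter d = 2d̄ with folded graph Γ̄ = (V̄,Ē) of diameter d̄, let V = V⁰ ∪ V¹ ∪ ⋯ ∪ V^r be an (r+1)-antipodal partition of V, and for v ∈ V̄ write v^i for the representative of the class v in V^i. Let R̄ be a resolving set for Γ̄ and set R = { w^ℓ : w ∈ R̄, 1 ≤ ℓ ≤ r }. If there exists u ∈ V̄ such that d_Γ̄(u,w) = d̄ for all w ∈ R̄, then R* = R ∪ {u¹,…,u^r} is a resolving set for Γ. In particular, μ(Γ) ≤ r(μ(Γ̄) + 1). -/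
open SimpleGraph

/-!
Projection to the folded graph does not increase distances, and distance-regularity puts every
vertex `x` on a geodesic from any `z` to an antipode of `z`. Together with lifting geodesics of the
folded graph, this shows that the distance from `(a, i)` to `(b, j)` is either `d̄(a, b)` or
`2 d̄ - d̄(a, b)`, the smaller value being attained for exactly one `j` when `d̄(a, b) < d̄`.
So any vertex `(w, k)` recovers `d̄(a, w)`, and the lift of `R̄` separates vertices in distinct
classes. Two vertices of one class `a` have distinct nearest vertices in a class `w` with
`d̄(a, w) < d̄`, and one of those two vertices lies outside `V⁰`; the vertex `u` guarantees that
such a `w` exists in `R̄ ∪ {u}` for every `a`.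
-/

namespace SimpleGraph

variable {V : Type*} {G : SimpleGraph V} {u w x z : V}

lemma exists_adj_dist_eq_of_dist_eq_succ {k : ℕ} (h : G.dist u w = k + 1) :
    ∃ v, G.Adj v w ∧ G.dist u v = k := by
  have hwu : G.Reachable w u := (Reachable.of_dist_ne_zero (by omega)).symm
  obtain ⟨p, hp⟩ := hwu.exists_walk_length_eq_dist
  cases p with
  | nil => simp at h
  | cons hadj q =>
    refine ⟨_, hadj.symm, le_antisymm ?_ ?_⟩
    · have := dist_le q.reverse
      rw [dist_comm, h, Walk.length_cons] at hp
      rw [Walk.length_reverse] at this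
      omega
    · have := hadj.symm.reachable.dist_triangle_right u
      rw [dist_eq_one_iff_adj.mpr hadj.symm] at this
      omega

lemma exists_dist_eq_of_le {m : ℕ} (h : m ≤ G.dist u w) : ∃ v, G.dist u v = m := by
  obtain ⟨k, hk⟩ := Nat.exists_eq_add_of_le h
  clear h
  induction k generalizing w with
  | zero => exact ⟨w, hk⟩
  | succ k ih =>
    obtain ⟨v, -, hv⟩ := exists_adj_dist_eq_of_dist_eq_succ hk
    exact ih hv

section DistRegular

variable [G.LocallyFinite]

lemma IsDistRegular.exists_adj_dist_eq_succ (hG : IsDistRegular G) {m : ℕ}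
    (hm : ∃ u w, G.dist u w = m + 1) (hzx : G.dist z x = m) :
    ∃ y, G.Adj x y ∧ G.dist z y = m + 1 := by
  obtain ⟨c, a, b, hcab⟩ := hG
  obtain ⟨u, w, huw⟩ := hm
  obtain ⟨v, hvw, huv⟩ := exists_adj_dist_eq_of_dist_eq_succ huw
  have hb : b m ≠ 0 := by
    have hfin : {y | G.Adj v y ∧ G.dist u y = m + 1}.Finite :=
      (G.neighborSet v).toFinite.subset fun _ h => h.1
    rw [← (hcab m u v huv).2.2]
    exact ((Set.ncard_pos hfin).mpr ⟨w, hvw, huw⟩).ne'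
  rw [← (hcab m z x hzx).2.2] at hb
  exact Set.nonempty_of_ncard_ne_zero hb

lemma IsDistRegular.exists_dist_add_dist_eq_diam (hG : IsDistRegular G) (hc : G.Connected)
    {D : ℕ} (hD : HasDiam G D) (z x : V) :
    ∃ y, G.dist z y = D ∧ G.dist z x + G.dist x y = D := by
  obtain ⟨n, hn⟩ := Nat.exists_eq_add_of_le (hD.1 z x)
  induction n generalizing x with
  | zero => exact ⟨x, hn.symm, by simpa using hn.symm⟩
  | succ n ih =>
    obtain ⟨u, w, huw⟩ := hD.2
    obtain ⟨x', hxx', hzx'⟩ := hG.exists_adj_dist_eq_succ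
      ⟨u, exists_dist_eq_of_le (u := u) (w := w) (m := G.dist z x + 1) (by omega)⟩ rfl
    obtain ⟨y, hzy, hsum⟩ := ih x' (by omega)
    have h1 := hc.dist_triangle (u := x) (v := x') (w := y)
    have h2 := hc.dist_triangle (u := z) (v := x) (w := y)
    rw [dist_eq_one_iff_adj.mpr hxx'] at h1
    exact ⟨y, hzy, by omega⟩

end DistRegular

end SimpleGraph

section Resolving

variable {V : Type*} {G : SimpleGraph V} {R : Set V} {D : ℕ}

lemma isResolving_of_subsingleton [Subsingleton V] (R : Set V) : IsResolving G R :=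
  fun u w h => (h (Subsingleton.elim u w)).elim

lemma metricDim_le (h : IsResolving G R) : metricDim G ≤ R.ncard :=
  Nat.sInf_le ⟨R, h, rfl⟩

lemma SimpleGraph.Connected.isResolving_univ (hG : G.Connected) : IsResolving G Set.univ :=
  fun u _ huw =>
    ⟨u, trivial, fun h => huw (hG.dist_eq_zero_iff.mp (h.symm.trans dist_self)).symm⟩

lemma SimpleGraph.Connected.exists_isResolving_ncard_eq_metricDim (hG : G.Connected) :
    ∃ R, IsResolving G R ∧ R.ncard = metricDim G :=
  Nat.sInf_mem (s := {n | ∃ R : Set V, IsResolving G R ∧ R.ncard = n})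
    ⟨_, Set.univ, hG.isResolving_univ, rfl⟩

lemma IsResolving.exists_mem_insert_dist_ne (hR : IsResolving G R) (hD : D ≠ 0) {u : V}
    (hu : ∀ w ∈ R, G.dist u w = D) (a : V) : ∃ w ∈ insert u R, G.dist a w ≠ D := by
  by_cases hau : a = u
  · exact ⟨u, Set.mem_insert u R, by simpa [hau] using hD.symm⟩
  · obtain ⟨w, hw, hne⟩ := hR a u hau
    exact ⟨w, Set.mem_insert_of_mem u hw, hu w hw ▸ hne⟩

lemma IsResolving.exists_superset_ncard_le (hR : IsResolving G R) (hD : D ≠ 0) :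
    ∃ T, R ⊆ T ∧ T.ncard ≤ R.ncard + 1 ∧ ∀ a, ∃ w ∈ T, G.dist a w ≠ D := by
  by_cases h : ∃ u, ∀ w ∈ R, G.dist u w = D
  · obtain ⟨u, hu⟩ := h
    exact ⟨insert u R, Set.subset_insert u R, Set.ncard_insert_le u R,
      hR.exists_mem_insert_dist_ne hD hu⟩
  · push Not at h
    exact ⟨R, subset_rfl, Nat.le_succ _, h⟩

end Resolving

structure IsAntipodalDRG {Vb : Type*} {t : ℕ} (G : SimpleGraph (Vb × Fin t)) (db : ℕ) :
    Prop where
  connected : G.Connected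
  distRegular : IsDistRegular G
  hasDiam : HasDiam G (2 * db)
  dist_eq_zero_or_eq_iff : ∀ x y, (G.dist x y = 0 ∨ G.dist x y = 2 * db) ↔ x.1 = y.1

namespace IsAntipodalDRG

variable {Vb : Type*} {t db : ℕ} {G : SimpleGraph (Vb × Fin t)}

lemma fst_ne_of_adj (hG : IsAntipodalDRG G db) {x y : Vb × Fin t} (h : G.Adj x y) :
    x.1 ≠ y.1 := by
  intro he
  have := (hG.dist_eq_zero_or_eq_iff x y).mpr he
  rw [dist_eq_one_iff_adj.mpr h] at this
  omega

def foldHom (hG : IsAntipodalDRG G db) : G →g folded G where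
  toFun := Prod.fst
  map_rel' h := ⟨hG.fst_ne_of_adj h, Or.inl ⟨_, _, h⟩⟩

lemma folded_connected (hG : IsAntipodalDRG G db) : (folded G).Connected := by
  obtain ⟨⟨v, i⟩⟩ := hG.connected.nonempty
  have : Nonempty Vb := ⟨v⟩
  exact ⟨fun a b => (hG.connected (a, i) (b, i)).map hG.foldHom⟩

lemma dist_fst_le (hG : IsAntipodalDRG G db) (x y : Vb × Fin t) :
    (folded G).dist x.1 y.1 ≤ G.dist x y := by
  obtain ⟨p, hp⟩ := hG.connected.exists_walk_length_eq_dist x y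
  have := dist_le (p.map hG.foldHom)
  rwa [Walk.length_map, hp] at this

lemma dist_eq_of_ne (hG : IsAntipodalDRG G db) {a : Vb} {i j : Fin t} (hij : i ≠ j) :
    G.dist (a, i) (a, j) = 2 * db :=
  ((hG.dist_eq_zero_or_eq_iff (a, i) (a, j)).mpr rfl).resolve_left
    fun h => hij (Prod.ext_iff.mp (hG.connected.dist_eq_zero_iff.mp h)).2

lemma eq_of_dist_eq (hG : IsAntipodalDRG G db) {a b : Vb} (hab : (folded G).dist a b < db)
    {i j k : Fin t} (hj : G.dist (a, i) (b, j) = (folded G).dist a b)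
    (hk : G.dist (a, i) (b, k) = (folded G).dist a b) : j = k := by
  by_contra hjk
  have h1 := hG.dist_eq_of_ne (a := b) hjk
  have h2 := hG.connected.dist_triangle (u := (b, j)) (v := (a, i)) (w := (b, k))
  rw [dist_comm (u := (b, j)) (v := (a, i))] at h2
  omega

lemma nontrivial (hG : IsAntipodalDRG G db) (hdb : db ≠ 0) : Nontrivial (Fin t) := by
  obtain ⟨x, y, hxy⟩ := hG.hasDiam.2
  refine ⟨x.2, y.2, fun h => ?_⟩
  have : x = y := Prod.ext ((hG.dist_eq_zero_or_eq_iff x y).mp (Or.inr hxy)) h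
  simp [this] at hxy
  omega

section LocallyFinite

variable [G.LocallyFinite]

lemma exists_fst_eq_dist_add (hG : IsAntipodalDRG G db) (z x : Vb × Fin t) :
    ∃ y : Vb × Fin t, y.1 = z.1 ∧ G.dist z x + G.dist x y = 2 * db := by
  obtain ⟨y, hzy, hy⟩ :=
    hG.distRegular.exists_dist_add_dist_eq_diam hG.connected hG.hasDiam z x
  exact ⟨y, ((hG.dist_eq_zero_or_eq_iff z y).mp (Or.inr hzy)).symm, hy⟩

lemma dist_add_dist_fst_le (hG : IsAntipodalDRG G db) (x y : Vb × Fin t) :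
    G.dist x y + (folded G).dist x.1 y.1 ≤ 2 * db := by
  obtain ⟨x', hx', hsum⟩ := hG.exists_fst_eq_dist_add x y
  have := hG.dist_fst_le y x'
  rw [hx', dist_comm (G := folded G)] at this
  omega

lemma folded_dist_le (hG : IsAntipodalDRG G db) (a b : Vb) : (folded G).dist a b ≤ db := by
  obtain ⟨⟨_, i⟩⟩ := hG.connected.nonempty
  have h1 : (folded G).dist a b ≤ G.dist (a, i) (b, i) := hG.dist_fst_le (a, i) (b, i)
  have h2 : G.dist (a, i) (b, i) + (folded G).dist a b ≤ 2 * db :=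
    hG.dist_add_dist_fst_le (a, i) (b, i)
  omega

lemma exists_adj_of_folded_adj (hG : IsAntipodalDRG G db) {a b : Vb} (hab : (folded G).Adj a b)
    (i : Fin t) : ∃ j, G.Adj (a, i) (b, j) := by
  obtain ⟨i₀, j₀, h⟩ : ∃ i₀ j₀, G.Adj (a, i₀) (b, j₀) := by
    rcases hab.2 with ⟨i₀, j₀, h⟩ | ⟨j₀, i₀, h⟩
    exacts [⟨_, _, h⟩, ⟨_, _, h.symm⟩]
  rcases eq_or_ne i i₀ with rfl | hi
  · exact ⟨j₀, h⟩
  obtain ⟨⟨b', j⟩, hb' : b' = b, hsum⟩ := hG.exists_fst_eq_dist_add (b, j₀) (a, i)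
  subst b'
  have h1 := hG.dist_eq_of_ne (a := a) hi.symm
  have h2 := hG.connected.dist_triangle (u := (a, i₀)) (v := (b, j₀)) (w := (a, i))
  have h3 := hG.connected.pos_dist_of_ne (u := (a, i)) (v := (b, j))
    fun e => hab.ne (congrArg Prod.fst e)
  rw [dist_eq_one_iff_adj.mpr h] at h2
  exact ⟨j, dist_eq_one_iff_adj.mp (by omega)⟩

lemma exists_dist_le_length (hG : IsAntipodalDRG G db) {a b : Vb} (p : (folded G).Walk a b)
    (i : Fin t) : ∃ j, G.dist (a, i) (b, j) ≤ p.length := by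
  induction p generalizing i with
  | nil => exact ⟨i, by simp⟩
  | @cons a c b hadj q ih =>
    obtain ⟨k, hk⟩ := hG.exists_adj_of_folded_adj hadj i
    obtain ⟨j, hj⟩ := ih k
    have := hG.connected.dist_triangle (u := (a, i)) (v := (c, k)) (w := (b, j))
    rw [dist_eq_one_iff_adj.mpr hk] at this
    exact ⟨j, by rw [Walk.length_cons]; omega⟩

lemma exists_dist_eq (hG : IsAntipodalDRG G db) (a : Vb) (i : Fin t) (b : Vb) :
    ∃ j, G.dist (a, i) (b, j) = (folded G).dist a b := by
  obtain ⟨p, hp⟩ := hG.folded_connected.exists_walk_length_eq_dist a b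
  obtain ⟨j, hj⟩ := hG.exists_dist_le_length p i
  exact ⟨j, le_antisymm (hp ▸ hj) (hG.dist_fst_le (a, i) (b, j))⟩

lemma dist_eq_or_eq (hG : IsAntipodalDRG G db) (a : Vb) (i : Fin t) (b : Vb) (j : Fin t) :
    G.dist (a, i) (b, j) = (folded G).dist a b ∨
      G.dist (a, i) (b, j) = 2 * db - (folded G).dist a b := by
  obtain ⟨k, hk⟩ := hG.exists_dist_eq a i b
  rcases eq_or_ne k j with rfl | hkj
  · exact Or.inl hk
  have h1 := hG.dist_eq_of_ne (a := b) hkj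
  have h2 := hG.connected.dist_triangle (u := (b, k)) (v := (a, i)) (w := (b, j))
  have h3 : G.dist (a, i) (b, j) + (folded G).dist a b ≤ 2 * db :=
    hG.dist_add_dist_fst_le (a, i) (b, j)
  rw [dist_comm (u := (b, k)) (v := (a, i))] at h2
  exact Or.inr (by omega)

lemma dist_ne_of_folded_dist_ne (hG : IsAntipodalDRG G db) {a b w : Vb}
    (h : (folded G).dist a w ≠ (folded G).dist b w) (i j k : Fin t) :
    G.dist (a, i) (w, k) ≠ G.dist (b, j) (w, k) := by
  have := hG.dist_eq_or_eq a i w k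
  have := hG.dist_eq_or_eq b j w k
  have := hG.folded_dist_le a w
  have := hG.folded_dist_le b w
  omega

end LocallyFinite

variable {r : ℕ} {G : SimpleGraph (Vb × Fin (r + 1))} [G.LocallyFinite]

lemma exists_dist_ne_of_snd_ne (hG : IsAntipodalDRG G db) {a w : Vb}
    (haw : (folded G).dist a w < db) {i j : Fin (r + 1)} (hij : i ≠ j) :
    ∃ k ≠ 0, G.dist (a, i) (w, k) ≠ G.dist (a, j) (w, k) := by
  obtain ⟨k, hk⟩ := hG.exists_dist_eq a i w
  obtain ⟨l, hl⟩ := hG.exists_dist_eq a j w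
  have hkl : k ≠ l := by
    rintro rfl
    rw [dist_comm (G := folded G)] at haw hk hl
    exact hij (hG.eq_of_dist_eq haw (dist_comm.trans hk) (dist_comm.trans hl))
  by_cases hk0 : k = 0
  · subst hk0
    exact ⟨l, hkl.symm, fun h => hkl (hG.eq_of_dist_eq haw hk (h.trans hl))⟩
  · exact ⟨k, hk0, fun h => hkl (hG.eq_of_dist_eq haw hl (h.symm.trans hk)).symm⟩

lemma isResolving_prod (hG : IsAntipodalDRG G db) {R T : Set Vb}
    (hR : IsResolving (folded G) R) (hRT : R ⊆ T)
    (hT : ∀ a, ∃ w ∈ T, (folded G).dist a w ≠ db) : IsResolving G (T ×ˢ {0}ᶜ) := by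
  rintro ⟨a, i⟩ ⟨b, j⟩ hne
  rcases eq_or_ne a b with rfl | hab
  · have hij : i ≠ j := fun h => hne (by rw [h])
    obtain ⟨w, hwT, haw⟩ := hT a
    obtain ⟨k, hk0, hk⟩ :=
      hG.exists_dist_ne_of_snd_ne ((hG.folded_dist_le a w).lt_of_ne haw) hij
    exact ⟨(w, k), ⟨hwT, hk0⟩, hk⟩
  · obtain ⟨w, hwR, hw⟩ := hR a b hab
    have := hG.nontrivial (by have := hG.folded_dist_le a w; have := hG.folded_dist_le b w; omega)
    obtain ⟨k, hk⟩ := exists_ne (0 : Fin (r + 1))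
    exact ⟨(w, k), ⟨hRT hwR, hk⟩, hG.dist_ne_of_folded_dist_ne hw i j k⟩

end IsAntipodalDRG

theorem stmt6_general {Vb : Type*} [Fintype Vb] (r db : ℕ)
    (G : SimpleGraph (Vb × Fin (r + 1)))
    (hconn : G.Connected) (hdr : IsDistRegular G) (hdiam : HasDiam G (2 * db))
    (hant : ∀ x y : Vb × Fin (r + 1),
      (G.dist x y = 0 ∨ G.dist x y = 2 * db) ↔ x.1 = y.1)
    (Rb : Set Vb) (hRb : IsResolving (folded G) Rb)
    (u : Vb) (hu : ∀ w ∈ Rb, (folded G).dist u w = db) :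
    IsResolving G
      ({p : Vb × Fin (r + 1) | p.1 ∈ Rb ∧ p.2 ≠ 0} ∪
        {p : Vb × Fin (r + 1) | p.1 = u ∧ p.2 ≠ 0}) ∧
      metricDim G ≤ r * (metricDim (folded G) + 1) := by
  have hG : IsAntipodalDRG G db := ⟨hconn, hdr, hdiam, hant⟩
  have : G.LocallyFinite := fun _ => Fintype.ofFinite _
  rcases eq_or_ne db 0 with rfl | hdb
  · have : Subsingleton (Vb × Fin (r + 1)) :=
      ⟨fun x y => hconn.dist_eq_zero_iff.mp (Nat.le_zero.mp (hdiam.1 x y))⟩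
    exact ⟨isResolving_of_subsingleton _,
      (metricDim_le (isResolving_of_subsingleton ∅)).trans (by simp)⟩
  refine ⟨?_, ?_⟩
  · show IsResolving G (Rb ×ˢ {0}ᶜ ∪ {u} ×ˢ {0}ᶜ)
    rw [← Set.union_prod, Set.union_singleton]
    exact hG.isResolving_prod hRb (Set.subset_insert u Rb) (hRb.exists_mem_insert_dist_ne hdb hu)
  · obtain ⟨R, hR, hRcard⟩ := hG.folded_connected.exists_isResolving_ncard_eq_metricDim
    obtain ⟨T, hRT, hTcard, hT⟩ := hR.exists_superset_ncard_le hdb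
    calc metricDim G ≤ (T ×ˢ ({0}ᶜ : Set (Fin (r + 1)))).ncard :=
          metricDim_le (hG.isResolving_prod hR hRT hT)
      _ = T.ncard * r := by rw [Set.ncard_prod, Set.ncard_compl]; simp
      _ ≤ r * (metricDim (folded G) + 1) := by rw [mul_comm]; gcongr; omega

/-- Let `G` be an `(r+1)`-antipodal distance-regular graph of even
diameter `d = 2d̄`, presented on `Vb × Fin (r+1)` so that the antipodal classes are the
fibres `{v} × Fin (r+1)`, with folded graph of diameter `d̄`.  Let `R̄` be a resolving
set for the folded graph and `R = {(w, ℓ) : w ∈ R̄, ℓ ≠ 0}`.  If some `u ∈ V̄` satisfies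
`d̄(u,w) = d̄` for all `w ∈ R̄`, then `R ∪ {(u, ℓ) : ℓ ≠ 0}` is a resolving set for `G`;
in particular `μ(G) ≤ r (μ(Ḡ) + 1)`. -/
theorem stmt6 {Vb : Type*} [Fintype Vb] (r db : ℕ)
    (G : SimpleGraph (Vb × Fin (r + 1)))
    (hconn : G.Connected) (hdr : IsDistRegular G) (hdiam : HasDiam G (2 * db))
    (hant : ∀ x y : Vb × Fin (r + 1),
      (G.dist x y = 0 ∨ G.dist x y = 2 * db) ↔ x.1 = y.1)
    (hfdiam : HasDiam (folded G) db)
    (Rb : Set Vb) (hRb : IsResolving (folded G) Rb)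
    (u : Vb) (hu : ∀ w ∈ Rb, (folded G).dist u w = db) :
    IsResolving G
      ({p : Vb × Fin (r + 1) | p.1 ∈ Rb ∧ p.2 ≠ 0} ∪
        {p : Vb × Fin (r + 1) | p.1 = u ∧ p.2 ≠ 0}) ∧
      metricDim G ≤ r * (metricDim (folded G) + 1) :=
  stmt6_general r db G hconn hdr hdiam hant Rb hRb u hu
end

section
/- Let Γ be a 2-antipodal distance-regular graph of diameter d, so that each vertex v has a unique antipode at distance d from it, and let V = V⁺ ∪ V⁻ be a 2-antipodal partition of the vertex set (each antipodal pair has one member in V⁺ and one in V⁻; write v⁺ and v⁻ for the two members of a pair). Then: (a) if R is any resolving set for Γ and v⁻ ∈ R, then (R ∖ {v⁻}) ∪ {v⁺} is also a resolving set for Γ; consequently (b) there exists a resolving set for Γ of minimum size μ(Γ) contained entirely in V⁺. -/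
open SimpleGraph

lemma aux_dist_getVert_le {V : Type*} {G : SimpleGraph V} (hconn : G.Connected)
    {u w : V} (p : G.Walk u w) (i : ℕ) : G.dist u (p.getVert i) ≤ i := by
  induction p generalizing i with
  | nil => simp [SimpleGraph.Walk.getVert, SimpleGraph.dist_self]
  | @cons a b c h q ih =>
    cases i with
    | zero => simp
    | succ i =>
      have h1 : G.dist a b ≤ 1 := dist_le h.toWalk
      calc G.dist a ((SimpleGraph.Walk.cons h q).getVert (i+1))
          = G.dist a (q.getVert i) := by rw [SimpleGraph.Walk.getVert_cons_succ]
        _ ≤ G.dist a b + G.dist b (q.getVert i) := hconn.dist_triangle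
        _ ≤ 1 + i := Nat.add_le_add h1 (ih i)
        _ = i + 1 := Nat.add_comm _ _

lemma aux_dist_getVert_right_le {V : Type*} {G : SimpleGraph V} (hconn : G.Connected)
    {u w : V} (p : G.Walk u w) {i : ℕ} (hi : i ≤ p.length) :
    G.dist (p.getVert i) w ≤ p.length - i := by
  have := aux_dist_getVert_le hconn p.reverse (p.length - i)
  rw [SimpleGraph.Walk.getVert_reverse] at this
  have h2 : p.length - (p.length - i) = i := by omega
  rw [h2] at this
  calc G.dist (p.getVert i) w = G.dist w (p.getVert i) := dist_comm
    _ ≤ p.length - i := this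

/-- In a distance-regular graph of diameter d, any vertex at distance `i < d`
from `u` has a neighbour at distance `i+1` from `u`. -/
lemma aux_exists_next {V : Type*} [Fintype V] {G : SimpleGraph V} (hconn : G.Connected)
    {d : ℕ}
    (hdr : ∃ c a b : ℕ → ℕ, ∀ (i : ℕ) (u w : V), G.dist u w = i →
      {x | G.Adj w x ∧ G.dist u x = i - 1}.ncard = c i ∧
      {x | G.Adj w x ∧ G.dist u x = i}.ncard = a i ∧
      {x | G.Adj w x ∧ G.dist u x = i + 1}.ncard = b i)
    (hdiam : (∀ u w : V, G.dist u w ≤ d) ∧ ∃ u w : V, G.dist u w = d)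
    {i : ℕ} (hi : i < d) (u w : V) (huw : G.dist u w = i) :
    ∃ y : V, G.Adj w y ∧ G.dist u y = i + 1 := by
  obtain ⟨c, a, b, hb⟩ := hdr
  -- first show b i ≥ 1 using a geodesic between two vertices at distance d
  obtain ⟨u0, w0, h0⟩ := hdiam.2
  obtain ⟨p, hp⟩ := (hconn u0 w0).exists_walk_length_eq_dist
  rw [h0] at hp
  set x := p.getVert i with hx
  set y := p.getVert (i+1) with hy
  have hux : G.dist u0 x ≤ i := aux_dist_getVert_le hconn p i
  have huy : G.dist u0 y ≤ i + 1 := aux_dist_getVert_le hconn p (i+1)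
  have hxw : G.dist x w0 ≤ d - i := by
    have := aux_dist_getVert_right_le hconn p (i := i) (by omega)
    rwa [hp] at this
  have hyw : G.dist y w0 ≤ d - (i+1) := by
    have := aux_dist_getVert_right_le hconn p (i := i+1) (by omega)
    rwa [hp] at this
  have htri1 : d ≤ G.dist u0 x + G.dist x w0 := h0 ▸ hconn.dist_triangle
  have htri2 : d ≤ G.dist u0 y + G.dist y w0 := h0 ▸ hconn.dist_triangle
  have hux' : G.dist u0 x = i := by omega
  have huy' : G.dist u0 y = i + 1 := by omega
  have hadj : G.Adj x y := p.adj_getVert_succ (by omega)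
  have hbpos : 1 ≤ b i := by
    have := (hb i u0 x hux').2.2
    rw [← this]
    have hfin : {z | G.Adj x z ∧ G.dist u0 z = i + 1}.Finite := Set.toFinite _
    have hne : {z | G.Adj x z ∧ G.dist u0 z = i + 1} ≠ ∅ :=
      Set.nonempty_iff_ne_empty.mp ⟨y, hadj, huy'⟩
    have := (Set.ncard_eq_zero hfin).not.mpr hne
    omega
  -- now transfer to the pair (u, w)
  have := (hb i u w huw).2.2
  have hfin : {z | G.Adj w z ∧ G.dist u z = i + 1}.Finite := Set.toFinite _
  have hne : {z | G.Adj w z ∧ G.dist u z = i + 1}.Nonempty := by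
    rw [Set.nonempty_iff_ne_empty]
    intro hemp
    have h0' : {z | G.Adj w z ∧ G.dist u z = i + 1}.ncard = 0 := by
      rw [hemp]; simp
    rw [this] at h0'
    omega
  obtain ⟨z, hz1, hz2⟩ := hne
  exact ⟨z, hz1, hz2⟩

/-- Key lemma: in the antipodal setting, `dist v u + dist u v̄ = d`. -/
lemma aux_antipode {Vb : Type*} [Fintype Vb] {d : ℕ} {G : SimpleGraph (Vb × Bool)}
    (hconn : G.Connected)
    (hdr : ∃ c a b : ℕ → ℕ, ∀ (i : ℕ) (u w : Vb × Bool), G.dist u w = i →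
      {x | G.Adj w x ∧ G.dist u x = i - 1}.ncard = c i ∧
      {x | G.Adj w x ∧ G.dist u x = i}.ncard = a i ∧
      {x | G.Adj w x ∧ G.dist u x = i + 1}.ncard = b i)
    (hdiam : (∀ u w : Vb × Bool, G.dist u w ≤ d) ∧ ∃ u w : Vb × Bool, G.dist u w = d)
    (hant : ∀ x y : Vb × Bool, (G.dist x y = 0 ∨ G.dist x y = d) ↔ x.1 = y.1) :
    ∀ u v : Vb × Bool, G.dist v u + G.dist u (v.1, !v.2) = d := by
  -- distance between antipodes is d
  have hvv : ∀ v : Vb × Bool, G.dist v (v.1, !v.2) = d := by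
    intro v
    have hne : v ≠ (v.1, !v.2) := by
      intro h
      have := congrArg Prod.snd h
      simp at this
    have hpos : 0 < G.dist v (v.1, !v.2) := hconn.pos_dist_of_ne hne
    have := (hant v (v.1, !v.2)).mpr rfl
    omega
  -- main induction on d - dist v u
  suffices H : ∀ k : ℕ, ∀ u v : Vb × Bool, d - G.dist v u ≤ k →
      G.dist v u + G.dist u (v.1, !v.2) = d by
    intro u v; exact H d u v (by omega)
  intro k
  induction k with
  | zero =>
    intro u v h
    have hle : G.dist v u ≤ d := hdiam.1 v u
    have heq : G.dist v u = d := by omega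
    -- u is the antipode of v
    have h1 : v.1 = u.1 := (hant v u).mp (Or.inr heq)
    have hdpos : 0 < d := by
      have := hvv v
      have hne : v ≠ (v.1, !v.2) := by
        intro h'
        have := congrArg Prod.snd h'
        simp at this
      have := hconn.pos_dist_of_ne hne
      omega
    have hvu : v ≠ u := by
      intro h'; rw [h'] at heq; rw [SimpleGraph.dist_self] at heq; omega
    have hu : u = (v.1, !v.2) := by
      have h2 : u.2 = !v.2 := by
        have : v.2 ≠ u.2 := by
          intro h2'
          exact hvu (Prod.ext h1.symm h2'.symm).symm
        revert this; cases v.2 <;> cases u.2 <;> simp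
      exact Prod.ext h1.symm h2
    rw [hu, SimpleGraph.dist_self, hvv v]; omega
  | succ k ih =>
    intro u v h
    have hle : G.dist v u ≤ d := hdiam.1 v u
    by_cases hcase : G.dist v u = d
    · -- same as base case
      exact ih u v (by omega)
    · set i := G.dist v u with hi
      have hilt : i < d := by omega
      obtain ⟨y, hadj, hyd⟩ := aux_exists_next hconn hdr hdiam hilt v u hi.symm
      have hk : d - G.dist v y ≤ k := by rw [hyd]; omega
      have hIH := ih y v hk
      rw [hyd] at hIH
      -- so dist y v̄ = d - i - 1
      have hyv : G.dist y (v.1, !v.2) = d - (i + 1) := by omega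
      have hup : G.dist u (v.1, !v.2) ≤ d - i := by
        calc G.dist u (v.1, !v.2) ≤ G.dist u y + G.dist y (v.1, !v.2) := hconn.dist_triangle
          _ ≤ 1 + (d - (i+1)) := Nat.add_le_add (dist_le hadj.toWalk) (le_of_eq hyv)
          _ = d - i := by omega
      have hlow : d ≤ G.dist v u + G.dist u (v.1, !v.2) := by
        have := hvv v
        calc d = G.dist v (v.1, !v.2) := this.symm
          _ ≤ G.dist v u + G.dist u (v.1, !v.2) := hconn.dist_triangle
      omega

/-- Let `G` be a `2`-antipodal distance-regular graph of diameter `d`,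
presented on `Vb × Bool` so that the antipodal pairs are exactly the fibres
`{v} × Bool` (so `V⁺ = Vb × {true}` and `V⁻ = Vb × {false}` form a `2`-antipodal
partition).  Then (a) replacing a vertex `(v, false)` of a resolving set by its antipode
`(v, true)` again yields a resolving set, and (b) there is a minimum resolving set
contained entirely in `V⁺`. -/
theorem stmt7 {Vb : Type*} [Fintype Vb] (d : ℕ) (G : SimpleGraph (Vb × Bool))
    (hconn : G.Connected) (hdr : IsDistRegular G) (hdiam : HasDiam G d)
    (hant : ∀ x y : Vb × Bool, (G.dist x y = 0 ∨ G.dist x y = d) ↔ x.1 = y.1) :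
    (∀ (R : Set (Vb × Bool)), IsResolving G R → ∀ v : Vb, (v, false) ∈ R →
      IsResolving G ((R \ {(v, false)}) ∪ {(v, true)})) ∧
    (∃ R : Set (Vb × Bool), IsResolving G R ∧ R.ncard = metricDim G ∧
      ∀ p ∈ R, p.2 = true) := by
  have key := aux_antipode hconn hdr hdiam hant
  -- dist u (v,false) = d - dist u (v,true), with dist u (v,true) ≤ d
  have key' : ∀ (u : Vb × Bool) (v : Vb),
      G.dist u (v, false) = d - G.dist u (v, true) ∧ G.dist u (v, true) ≤ d := by
    intro u v
    have h := key u (v, true)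
    simp only [Bool.not_true] at h
    rw [SimpleGraph.dist_comm (u := (v, true)) (v := u)] at h
    constructor <;> omega
  -- part (a)
  have parta : ∀ (R : Set (Vb × Bool)), IsResolving G R → ∀ v : Vb, (v, false) ∈ R →
      IsResolving G ((R \ {(v, false)}) ∪ {(v, true)}) := by
    intro R hR v hvR u w huw
    obtain ⟨x, hxR, hx⟩ := hR u w huw
    by_cases hx' : x = (v, false)
    · refine ⟨(v, true), Or.inr rfl, ?_⟩
      subst hx'
      obtain ⟨h1, h2⟩ := key' u v
      obtain ⟨h3, h4⟩ := key' w v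
      omega
    · exact ⟨x, Or.inl ⟨hxR, hx'⟩, hx⟩
  refine ⟨parta, ?_⟩
  -- part (b)
  have univres : IsResolving G Set.univ := by
    intro u w huw
    refine ⟨u, trivial, ?_⟩
    rw [SimpleGraph.dist_self]
    have := hconn.pos_dist_of_ne (Ne.symm huw)
    omega
  have hSne : {n | ∃ R : Set (Vb × Bool), IsResolving G R ∧ R.ncard = n}.Nonempty :=
    ⟨Set.univ.ncard, Set.univ, univres, rfl⟩
  have hμmem : ∃ R : Set (Vb × Bool), IsResolving G R ∧ R.ncard = metricDim G :=
    Nat.sInf_mem hSne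
  have hmin : ∀ R0 : Set (Vb × Bool), IsResolving G R0 → metricDim G ≤ R0.ncard :=
    fun R0 h => Nat.sInf_le ⟨R0, h, rfl⟩
  -- minimize the number of "false" vertices among minimum resolving sets
  set F : Set (Vb × Bool) := {p | p.2 = false} with hF
  set T : Set ℕ := {m | ∃ R : Set (Vb × Bool), IsResolving G R ∧
    R.ncard = metricDim G ∧ (R ∩ F).ncard = m} with hT
  have hTne : T.Nonempty := by
    obtain ⟨R, hR, hc⟩ := hμmem
    exact ⟨(R ∩ F).ncard, R, hR, hc, rfl⟩
  obtain ⟨R, hR, hcard, hm⟩ : ∃ R : Set (Vb × Bool), IsResolving G R ∧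
      R.ncard = metricDim G ∧ (R ∩ F).ncard = sInf T := Nat.sInf_mem hTne
  have hm0 : sInf T = 0 := by
    by_contra hm0
    -- get a false vertex in R
    have hRFne : (R ∩ F).Nonempty := by
      rw [Set.nonempty_iff_ne_empty]
      intro hemp
      rw [hemp, Set.ncard_empty] at hm
      exact hm0 hm.symm
    obtain ⟨p, hpR, hpF⟩ := hRFne
    have hp : p = (p.1, false) := Prod.ext rfl hpF
    rw [hp] at hpR
    set R' := (R \ {(p.1, false)}) ∪ {(p.1, true)} with hR'
    have hR'res : IsResolving G R' := parta R hR p.1 hpR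
    have hμpos : 1 ≤ metricDim G := by
      rcases Nat.eq_zero_or_pos (metricDim G) with h0 | h1
      · rw [h0] at hcard
        rw [Set.ncard_eq_zero (Set.toFinite R)] at hcard
        rw [hcard] at hpR
        exact absurd hpR (Set.notMem_empty _)
      · exact h1
    have htrue_notin : (p.1, true) ∉ R := by
      intro hin
      have hmem : (p.1, true) ∈ R \ {(p.1, false)} := ⟨hin, by simp⟩
      have hRe : R' = R \ {(p.1, false)} := by
        rw [hR', Set.union_singleton, Set.insert_eq_self.mpr hmem]
      have hc1 : R'.ncard = metricDim G - 1 := by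
        rw [hRe, Set.ncard_diff_singleton_of_mem hpR, hcard]
      have := hmin R' hR'res
      omega
    have hc2 : R'.ncard = metricDim G := by
      rw [hR', Set.union_singleton,
        Set.ncard_insert_of_notMem (fun h => htrue_notin h.1),
        Set.ncard_diff_singleton_of_mem hpR, hcard]
      omega
    have hRF' : R' ∩ F = (R ∩ F) \ {(p.1, false)} := by
      ext q
      simp only [hR', hF, Set.mem_inter_iff, Set.mem_union, Set.mem_diff,
        Set.mem_singleton_iff, Set.mem_setOf_eq]
      constructor
      · rintro ⟨hq | hq, hq2⟩
        · exact ⟨⟨hq.1, hq2⟩, hq.2⟩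
        · rw [hq] at hq2; simp at hq2
      · rintro ⟨⟨hq1, hq2⟩, hq3⟩
        exact ⟨Or.inl ⟨hq1, hq3⟩, hq2⟩
    have hpmem : (p.1, false) ∈ R ∩ F := Set.mem_inter hpR (by simp [hF])
    have hc3 : (R' ∩ F).ncard = sInf T - 1 := by
      rw [hRF', Set.ncard_diff_singleton_of_mem hpmem, hm]
    have hmemT : sInf T - 1 ∈ T := ⟨R', hR'res, hc2, hc3⟩
    have := Nat.sInf_le hmemT
    omega
  refine ⟨R, hR, hcard, ?_⟩
  intro q hq
  rw [hm0] at hm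
  have hemp : R ∩ F = ∅ := (Set.ncard_eq_zero (Set.toFinite _)).mp hm
  by_contra hq2
  have hqf : q.2 = false := by
    cases h : q.2
    · rfl
    · exact absurd h hq2
  have : q ∈ R ∩ F := Set.mem_inter hq hqf
  rw [hemp] at this
  exact this
end

section
/- For every integer v ≥ 3, the graph K_{v,v} − I (the complete bipartite graph K_{v,v} with a perfect matching removed, i.e. the graph on {1,…,v} × {+,−} in which (i,+) is adjacent to (j,−) iff i ≠ j, with no other edges) has metric dimension v − 1. -/
open SimpleGraph

/-- `K_{v,v}` minus a perfect matching: `(i, b)` is adjacent to `(j, c)` iff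
`b ≠ c` and `i ≠ j`. -/
def completeBipartiteMinusMatching (v : ℕ) : SimpleGraph (Fin v × Bool) :=
  SimpleGraph.fromRel (fun p q => p.2 ≠ q.2 ∧ p.1 ≠ q.1)

lemma cbmm_adj_iff {v : ℕ} {p q : Fin v × Bool} :
    (completeBipartiteMinusMatching v).Adj p q ↔ p.2 ≠ q.2 ∧ p.1 ≠ q.1 := by
  simp only [completeBipartiteMinusMatching, fromRel_adj]
  constructor
  · rintro ⟨_, h | h⟩
    · exact h
    · exact ⟨h.1.symm, h.2.symm⟩
  · intro h
    exact ⟨fun he => h.2 (congrArg Prod.fst he), Or.inl h⟩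

lemma cbmm_parity {v : ℕ} {p q : Fin v × Bool}
    (w : (completeBipartiteMinusMatching v).Walk p q) :
    (p.2 = q.2) ↔ Even w.length := by
  induction w with
  | nil => simp
  | @cons a x c h w ih =>
    have h1 := (cbmm_adj_iff.mp h).1
    rw [SimpleGraph.Walk.length_cons, Nat.even_add_one, ← ih]
    revert h1
    cases a.2 <;> cases x.2 <;> cases c.2 <;> simp

lemma exists_third {v : ℕ} (hv : 3 ≤ v) (i j : Fin v) :
    ∃ k : Fin v, k ≠ i ∧ k ≠ j := by
  have hne : (({i, j} : Finset (Fin v))ᶜ).Nonempty := by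
    rw [← Finset.card_pos, Finset.card_compl]
    have h2 : ({i, j} : Finset (Fin v)).card ≤ 2 :=
      (Finset.card_insert_le _ _).trans (by simp)
    simp only [Fintype.card_fin]
    omega
  obtain ⟨k, hk⟩ := hne
  simp only [Finset.mem_compl, Finset.mem_insert, Finset.mem_singleton, not_or] at hk
  exact ⟨k, hk.1, hk.2⟩

lemma cbmm_dist (v : ℕ) (hv : 3 ≤ v) (i j : Fin v) (b c : Bool) :
    (completeBipartiteMinusMatching v).dist (i, b) (j, c) =
      if i = j then (if b = c then 0 else 3) else (if b = c then 2 else 1) := by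
  set G := completeBipartiteMinusMatching v with hG
  by_cases hij : i = j
  · by_cases hbc : b = c
    · subst hij; subst hbc; simp [SimpleGraph.dist_self]
    · -- dist = 3
      subst hij
      obtain ⟨k, hki, _⟩ := exists_third hv i i
      obtain ⟨l, hli, hlk⟩ := exists_third hv i k
      have h1 : G.Adj (i, b) (k, c) := cbmm_adj_iff.mpr ⟨hbc, (Ne.symm hki)⟩
      have h2 : G.Adj (k, c) (l, b) := cbmm_adj_iff.mpr ⟨Ne.symm hbc, Ne.symm hlk⟩
      have h3 : G.Adj (l, b) (i, c) := cbmm_adj_iff.mpr ⟨hbc, hli⟩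
      let w : G.Walk (i, b) (i, c) :=
        SimpleGraph.Walk.cons h1 (SimpleGraph.Walk.cons h2 (SimpleGraph.Walk.cons h3 .nil))
      have hle : G.dist (i, b) (i, c) ≤ 3 := by
        have := SimpleGraph.dist_le w
        have hw : w.length = 3 := rfl
        omega
      have hne : ((i, b) : Fin v × Bool) ≠ (i, c) := by simp [hbc]
      have hpos : 0 < G.dist (i, b) (i, c) :=
        SimpleGraph.Reachable.pos_dist_of_ne ⟨w⟩ hne
      obtain ⟨p, hp⟩ := SimpleGraph.exists_walk_of_dist_ne_zero hpos.ne'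
      have hodd : ¬ Even p.length := by
        rw [← cbmm_parity p]; simpa using hbc
      have hne1 : G.dist (i, b) (i, c) ≠ 1 := by
        intro h1
        have := SimpleGraph.dist_eq_one_iff_adj.mp h1
        rw [cbmm_adj_iff] at this
        exact this.2 rfl
      rw [Nat.even_iff, hp] at hodd
      rw [if_pos rfl, if_neg hbc]
      omega
  · by_cases hbc : b = c
    · -- dist = 2
      obtain ⟨k, hki, hkj⟩ := exists_third hv i j
      subst hbc
      have h1 : G.Adj (i, b) (k, !b) := cbmm_adj_iff.mpr ⟨by simp, Ne.symm hki⟩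
      have h2 : G.Adj (k, !b) (j, b) := cbmm_adj_iff.mpr ⟨by simp, hkj⟩
      let w : G.Walk (i, b) (j, b) := SimpleGraph.Walk.cons h1 (.cons h2 .nil)
      have hle : G.dist (i, b) (j, b) ≤ 2 := by
        have := SimpleGraph.dist_le w
        have hw : w.length = 2 := rfl
        omega
      have hne : ((i, b) : Fin v × Bool) ≠ (j, b) := by simp [hij]
      have hpos : 0 < G.dist (i, b) (j, b) :=
        SimpleGraph.Reachable.pos_dist_of_ne ⟨w⟩ hne
      obtain ⟨p, hp⟩ := SimpleGraph.exists_walk_of_dist_ne_zero hpos.ne'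
      have heven : Even p.length := by rw [← cbmm_parity p]
      rw [Nat.even_iff, hp] at heven
      rw [if_neg hij, if_pos rfl]
      omega
    · -- dist = 1
      have : G.Adj (i, b) (j, c) := cbmm_adj_iff.mpr ⟨hbc, hij⟩
      rw [if_neg hij, if_neg hbc, SimpleGraph.dist_eq_one_iff_adj]
      exact this

/-- For every `v ≥ 3`, the metric dimension of `K_{v,v} − I` is `v − 1`. -/
theorem stmt9 (v : ℕ) (hv : 3 ≤ v) :
    metricDim (completeBipartiteMinusMatching v) = v - 1 := by
  set G := completeBipartiteMinusMatching v with hG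
  have hdist := cbmm_dist v hv
  -- the resolving set of size v - 1
  set last : Fin v := ⟨v - 1, by omega⟩ with hlast
  set R : Set (Fin v × Bool) := (fun i => (i, true)) '' {i : Fin v | i ≠ last} with hR
  have hmem : (v - 1) ∈ {n | ∃ R : Set (Fin v × Bool), IsResolving G R ∧ R.ncard = n} := by
    refine ⟨R, ?_, ?_⟩
    · rintro ⟨j, b⟩ ⟨k, c⟩ hne
      have hwit : ∀ m : Fin v, m ≠ last → ((m, true) : Fin v × Bool) ∈ R :=
        fun m hm => ⟨m, hm, rfl⟩
      by_cases hjk : j = k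
      · subst hjk
        have hbc : b ≠ c := by simpa using hne
        by_cases hj : j = last
        · obtain ⟨m, hm0, hmj⟩ := exists_third hv last j
          refine ⟨(m, true), hwit m hm0, ?_⟩
          rw [hdist, hdist]
          have hjm : ¬ j = m := fun h => hmj h.symm
          cases b <;> cases c <;> simp_all
        · refine ⟨(j, true), hwit j hj, ?_⟩
          rw [hdist, hdist]
          cases b <;> cases c <;> simp_all
      · by_cases hj : j = last
        · have hk : k ≠ last := fun h => hjk (hj.trans h.symm)
          refine ⟨(k, true), hwit k hk, ?_⟩
          rw [hdist, hdist]
          have hkj' : ¬ k = j := fun h => hjk h.symm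
          cases b <;> cases c <;> simp_all
        · refine ⟨(j, true), hwit j hj, ?_⟩
          rw [hdist, hdist]
          have hkj : ¬ k = j := fun h => hjk h.symm
          cases b <;> cases c <;> simp_all
    · have hinj : Function.Injective (fun i : Fin v => (i, true)) := by
        intro a b h; simpa using h
      rw [hR, Set.ncard_image_of_injective _ hinj]
      have : {i : Fin v | i ≠ last} = ({last} : Set (Fin v))ᶜ := by
        ext x; simp
      rw [this]
      have h1 := Set.ncard_add_ncard_compl ({last} : Set (Fin v))
      rw [Set.ncard_singleton, Nat.card_eq_fintype_card, Fintype.card_fin] at h1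
      omega
  apply le_antisymm
  · exact Nat.sInf_le hmem
  · apply le_csInf ⟨_, hmem⟩
    rintro n ⟨S, hS, rfl⟩
    by_contra hlt
    push_neg at hlt
    set s : Set (Fin v) := Prod.fst '' S with hs
    have h1 : s.ncard ≤ S.ncard := Set.ncard_image_le
    have h2 := Set.ncard_add_ncard_compl s
    rw [Nat.card_eq_fintype_card, Fintype.card_fin] at h2
    have h3 : 1 < sᶜ.ncard := by omega
    obtain ⟨i, j, hi, hj, hij⟩ := (Set.one_lt_ncard_iff).mp h3
    obtain ⟨r, hrS, hd⟩ := hS (i, true) (j, true) (by simp [hij])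
    obtain ⟨m, c⟩ := r
    have hm : m ∈ s := ⟨(m, c), hrS, rfl⟩
    have hmi : ¬ i = m := fun h => hi (h ▸ hm)
    have hmj : ¬ j = m := fun h => hj (h ▸ hm)
    rw [hdist, hdist, if_neg hmi, if_neg hmj] at hd
    exact hd rfl
end

section
/- For every integer k ≥ 2, the Odd graph O_k and its bipartite double D(O_k) (the doubled Odd graph) have equal metric dimension, and this common value is at most 2k − 2. -/
open SimpleGraph

/-- The bipartite double of `G`: vertex set `V × Bool`, with `(u, b)` adjacent to
`(w, c)` iff `b ≠ c` and `u` is adjacent to `w` in `G`. -/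
def bipDouble {V : Type*} (G : SimpleGraph V) : SimpleGraph (V × Bool) :=
  SimpleGraph.fromRel (fun p q => p.2 ≠ q.2 ∧ G.Adj p.1 q.1)

/-- The Odd graph `O_k`: vertices are the `(k-1)`-subsets of a `(2k-1)`-set,
adjacent iff disjoint. -/
def oddGraph (k : ℕ) : SimpleGraph {s : Finset (Fin (2 * k - 1)) // s.card = k - 1} :=
  SimpleGraph.fromRel (fun a b => Disjoint a.1 b.1)

namespace OddAux

open Finset

abbrev OV (k : ℕ) := {s : Finset (Fin (2 * k - 1)) // s.card = k - 1}

variable {k : ℕ}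

lemma odd_adj {A B : OV k} : (oddGraph k).Adj A B ↔ A ≠ B ∧ Disjoint A.1 B.1 := by
  constructor
  · rintro ⟨hne, h | h⟩
    · exact ⟨hne, h⟩
    · exact ⟨hne, h.symm⟩
  · rintro ⟨hne, h⟩
    exact ⟨hne, Or.inl h⟩

lemma adj_of_disjoint (hk : 2 ≤ k) {A B : OV k} (h : Disjoint A.1 B.1) :
    (oddGraph k).Adj A B := by
  refine odd_adj.mpr ⟨?_, h⟩
  intro hAB
  have h2 : B.1 = ∅ := by
    have := h
    rw [hAB] at this
    exact disjoint_self.mp this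
  have := B.2
  rw [h2] at this
  simp at this
  omega

lemma icard_le (A B : OV k) : (A.1 ∩ B.1).card ≤ k - 1 := by
  calc (A.1 ∩ B.1).card ≤ B.1.card := card_le_card inter_subset_right
  _ = k - 1 := B.2

lemma adj_inter (hk : 2 ≤ k) {A B : OV k} (h : (oddGraph k).Adj A B) (X : OV k) :
    (A.1 ∩ X.1).card + (B.1 ∩ X.1).card ≤ k - 1 ∧
      k - 2 ≤ (A.1 ∩ X.1).card + (B.1 ∩ X.1).card := by
  obtain ⟨hne, hdisj⟩ := odd_adj.mp h
  have hdisj2 : Disjoint (A.1 ∩ X.1) (B.1 ∩ X.1) :=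
    hdisj.mono inter_subset_left inter_subset_left
  have hunion : (A.1 ∩ X.1) ∪ (B.1 ∩ X.1) = (A.1 ∪ B.1) ∩ X.1 := by
    rw [union_inter_distrib_right]
  have hcard : (A.1 ∩ X.1).card + (B.1 ∩ X.1).card = ((A.1 ∪ B.1) ∩ X.1).card := by
    rw [← hunion, card_union_of_disjoint hdisj2]
  constructor
  · rw [hcard]
    calc ((A.1 ∪ B.1) ∩ X.1).card ≤ X.1.card := card_le_card inter_subset_right
    _ = k - 1 := X.2
  · rw [hcard]
    have hAB : (A.1 ∪ B.1).card = 2 * k - 2 := by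
      rw [card_union_of_disjoint hdisj, A.2, B.2]; omega
    have h1 : X.1 \ (A.1 ∪ B.1) ⊆ (A.1 ∪ B.1)ᶜ := by
      intro x hx
      simp only [mem_sdiff] at hx
      simpa using hx.2
    have h2 : ((A.1 ∪ B.1)ᶜ).card = 1 := by
      rw [card_compl, hAB]
      simp only [Fintype.card_fin]
      omega
    have h3 : (X.1 \ (A.1 ∪ B.1)).card ≤ 1 := le_trans (card_le_card h1) (le_of_eq h2)
    have h4 : (X.1 ∩ (A.1 ∪ B.1)).card + (X.1 \ (A.1 ∪ B.1)).card = X.1.card :=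
      card_inter_add_card_sdiff _ _
    rw [inter_comm] at h4
    have := X.2
    omega

lemma walk_lb (hk : 2 ≤ k) {A B : OV k} (p : (oddGraph k).Walk A B) :
    (Even p.length → 2 * (k - 1) ≤ p.length + 2 * (A.1 ∩ B.1).card) ∧
      (Odd p.length → 2 * (A.1 ∩ B.1).card + 1 ≤ p.length) := by
  induction p with
  | nil =>
    rename_i u
    constructor
    · intro _
      have : (u.1 ∩ u.1).card = k - 1 := by rw [inter_self]; exact u.2
      simp only [SimpleGraph.Walk.length_nil]
      omega
    · intro h
      simp at h
  | cons h q ih =>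
    rename_i u v w
    have hf := adj_inter hk h w
    have h1 := icard_le u w
    have h2 := icard_le v w
    rw [SimpleGraph.Walk.length_cons]
    rcases Nat.even_or_odd q.length with he | ho
    · have := ih.1 he
      constructor
      · intro hev
        rw [Nat.even_add_one] at hev
        exact absurd he hev
      · intro _
        omega
    · have := ih.2 ho
      constructor
      · intro _
        omega
      · intro hod
        rw [Nat.odd_add_one] at hod
        exact absurd ho (by simpa using hod)

lemma eq_of_icard_full {A B : OV k} (h : (A.1 ∩ B.1).card = k - 1) : A = B := by
  have h1 : A.1 ∩ B.1 = A.1 := eq_of_subset_of_card_le inter_subset_left (by rw [h, A.2])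
  have h2 : A.1 ∩ B.1 = B.1 := eq_of_subset_of_card_le inter_subset_right (by rw [h, B.2])
  exact Subtype.ext (h1 ▸ h2)

lemma exists_even_walk (hk : 2 ≤ k) :
    ∀ (d : ℕ) (A B : OV k), (A.1 ∩ B.1).card + d = k - 1 →
      ∃ p : (oddGraph k).Walk A B, p.length = 2 * d := by
  intro d
  induction d with
  | zero =>
    intro A B h
    obtain rfl : A = B := eq_of_icard_full (by omega)
    exact ⟨SimpleGraph.Walk.nil, rfl⟩
  | succ d ih =>
    intro A B h
    have hiB : (B.1 ∩ A.1).card + (B.1 \ A.1).card = B.1.card := card_inter_add_card_sdiff _ _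
    have hBA : (B.1 \ A.1).card = d + 1 := by
      rw [inter_comm] at hiB
      rw [B.2] at hiB
      omega
    have hAB : (A.1 \ B.1).card = d + 1 := by
      have := card_inter_add_card_sdiff A.1 B.1
      rw [A.2] at this
      omega
    obtain ⟨x, hx⟩ : (B.1 \ A.1).Nonempty := card_pos.mp (by omega)
    obtain ⟨y, hy⟩ : (A.1 \ B.1).Nonempty := card_pos.mp (by omega)
    rw [mem_sdiff] at hx hy
    have hxA : x ∉ A.1 := hx.2
    have hxB : x ∈ B.1 := hx.1
    have hyA : y ∈ A.1 := hy.1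
    have hyB : y ∉ B.1 := hy.2
    -- the swapped set
    have hA2card : (insert x (A.1.erase y)).card = k - 1 := by
      rw [card_insert_of_notMem (fun hc => hxA (mem_of_mem_erase hc)),
        card_erase_of_mem hyA, A.2]
      have := A.2
      have : 1 ≤ k - 1 := by
        by_contra hcon
        have hk1 : k - 1 = 0 := by omega
        omega
      omega
    set A2 : OV k := ⟨insert x (A.1.erase y), hA2card⟩ with hA2
    have hA2B : (A2.1 ∩ B.1).card = (A.1 ∩ B.1).card + 1 := by
      have hset : A2.1 ∩ B.1 = insert x (A.1 ∩ B.1) := by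
        ext z
        simp only [hA2, mem_inter, mem_insert, mem_erase]
        constructor
        · rintro ⟨hz1 | ⟨hzy, hzA⟩, hzB⟩
          · exact Or.inl hz1
          · exact Or.inr ⟨hzA, hzB⟩
        · rintro (rfl | ⟨hzA, hzB⟩)
          · exact ⟨Or.inl rfl, hxB⟩
          · refine ⟨Or.inr ⟨fun hc => hyB (hc ▸ hzB), hzA⟩, hzB⟩
      rw [hset, card_insert_of_notMem (fun hc => hxA (mem_inter.mp hc).1)]
    -- the common neighbor
    have hxA' : x ∉ A.1 := hxA
    have hCcard : (((insert x A.1)ᶜ : Finset (Fin (2*k-1)))).card = k - 1 := by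
      rw [card_compl, card_insert_of_notMem hxA', A.2]
      simp only [Fintype.card_fin]
      omega
    set C : OV k := ⟨(insert x A.1)ᶜ, hCcard⟩ with hC
    have hadj1 : (oddGraph k).Adj A C := by
      apply adj_of_disjoint hk
      exact (disjoint_compl_right).mono_left (subset_insert x A.1)
    have hadj2 : (oddGraph k).Adj C A2 := by
      apply adj_of_disjoint hk
      refine (disjoint_compl_left).mono_right ?_
      exact insert_subset_insert x (erase_subset y A.1)
    obtain ⟨p, hp⟩ := ih A2 B (by omega)
    refine ⟨SimpleGraph.Walk.cons hadj1 (SimpleGraph.Walk.cons hadj2 p), ?_⟩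
    simp [SimpleGraph.Walk.length_cons, hp]
    omega

lemma exists_odd_walk (hk : 2 ≤ k) (A B : OV k) :
    ∃ p : (oddGraph k).Walk A B, p.length = 2 * (A.1 ∩ B.1).card + 1 := by
  have hcompl : (A.1ᶜ).card = k := by
    rw [card_compl, A.2]
    simp only [Fintype.card_fin]
    omega
  have hBsplit : (B.1 ∩ A.1).card + (B.1 \ A.1).card = B.1.card := card_inter_add_card_sdiff _ _
  have hBA : (B.1 \ A.1).card = k - 1 - (A.1 ∩ B.1).card := by
    rw [inter_comm] at hBsplit
    rw [B.2] at hBsplit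
    omega
  have hsub : A.1ᶜ ∩ B.1 = B.1 \ A.1 := by
    ext z
    simp [mem_compl, mem_sdiff, and_comm]
  have hsplit2 : (A.1ᶜ ∩ B.1).card + (A.1ᶜ \ B.1).card = (A.1ᶜ).card :=
    card_inter_add_card_sdiff _ _
  have hicard := icard_le A B
  obtain ⟨p0, hp0⟩ : (A.1ᶜ \ B.1).Nonempty := by
    apply card_pos.mp
    rw [hsub, hBA] at hsplit2
    omega
  rw [mem_sdiff] at hp0
  have hA'card : ((A.1ᶜ).erase p0).card = k - 1 := by
    rw [card_erase_of_mem hp0.1, hcompl]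
  set A' : OV k := ⟨(A.1ᶜ).erase p0, hA'card⟩ with hA'
  have hadj : (oddGraph k).Adj A A' := by
    apply adj_of_disjoint hk
    exact disjoint_compl_right.mono_right (erase_subset _ _)
  have hA'B : (A'.1 ∩ B.1).card = k - 1 - (A.1 ∩ B.1).card := by
    have : A'.1 ∩ B.1 = A.1ᶜ ∩ B.1 := by
      ext z
      simp only [hA', mem_inter, mem_erase, mem_compl]
      constructor
      · rintro ⟨⟨_, hz⟩, hzB⟩; exact ⟨hz, hzB⟩
      · rintro ⟨hz, hzB⟩
        exact ⟨⟨fun hc => hp0.2 (hc ▸ hzB), hz⟩, hzB⟩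
    rw [this, hsub, hBA]
  obtain ⟨p, hp⟩ := exists_even_walk hk (A.1 ∩ B.1).card A' B (by omega)
  exact ⟨SimpleGraph.Walk.cons hadj p, by simp [SimpleGraph.Walk.length_cons, hp]⟩

lemma dist_odd (hk : 2 ≤ k) (A B : OV k) :
    (oddGraph k).dist A B =
      min (2 * (k - 1 - (A.1 ∩ B.1).card)) (2 * (A.1 ∩ B.1).card + 1) := by
  have hicard := icard_le A B
  obtain ⟨pe, hpe⟩ := exists_even_walk hk (k - 1 - (A.1 ∩ B.1).card) A B (by omega)
  obtain ⟨po, hpo⟩ := exists_odd_walk hk A B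
  have hle1 := SimpleGraph.dist_le pe
  have hle2 := SimpleGraph.dist_le po
  obtain ⟨q, hq⟩ := (SimpleGraph.Walk.reachable pe).exists_walk_length_eq_dist
  have hlb := walk_lb hk q
  rcases Nat.even_or_odd q.length with he | ho
  · have := hlb.1 he
    omega
  · have := hlb.2 ho
    omega
lemma bip_adj {W : Type*} {G : SimpleGraph W} {p q : W × Bool} :
    (bipDouble G).Adj p q ↔ p.2 ≠ q.2 ∧ G.Adj p.1 q.1 := by
  constructor
  · rintro ⟨hne, ⟨h1, h2⟩ | ⟨h1, h2⟩⟩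
    · exact ⟨h1, h2⟩
    · exact ⟨h1.symm, h2.symm⟩
  · rintro ⟨h1, h2⟩
    refine ⟨fun hc => h1 (congrArg Prod.snd hc), Or.inl ⟨h1, h2⟩⟩

lemma walk_down {W : Type*} {G : SimpleGraph W} :
    ∀ {x y : W × Bool} (p : (bipDouble G).Walk x y),
      ∃ q : G.Walk x.1 y.1, q.length = p.length ∧ (x.2 = y.2 ↔ Even p.length) := by
  intro x y p
  induction p with
  | nil => exact ⟨SimpleGraph.Walk.nil, rfl, by simp⟩
  | cons h q ih =>
    rename_i u v w
    obtain ⟨hne, hadj⟩ := bip_adj.mp h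
    obtain ⟨q', hq', hpar⟩ := ih
    refine ⟨SimpleGraph.Walk.cons hadj q', by simp [hq'], ?_⟩
    rw [SimpleGraph.Walk.length_cons, Nat.even_add_one, ← hpar]
    revert hne
    cases u.2 <;> cases v.2 <;> cases w.2 <;> simp

lemma walk_up {W : Type*} {G : SimpleGraph W} :
    ∀ {u v : W} (q : G.Walk u v) (b c : Bool), (b = c ↔ Even q.length) →
      ∃ p : (bipDouble G).Walk (u, b) (v, c), p.length = q.length := by
  intro u v q
  induction q with
  | nil =>
    intro b c h
    obtain rfl : b = c := h.mpr (by simp)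
    exact ⟨SimpleGraph.Walk.nil, rfl⟩
  | cons h q ih =>
    rename_i x y z
    intro b c hpar
    have hadj : (bipDouble G).Adj (x, b) (y, !b) := bip_adj.mpr ⟨by simp, h⟩
    have hpar' : (!b) = c ↔ Even q.length := by
      rw [SimpleGraph.Walk.length_cons, Nat.even_add_one] at hpar
      by_cases he : Even q.length <;> revert hpar <;>
        cases b <;> cases c <;> simp_all
    obtain ⟨p, hp⟩ := ih (!b) c hpar'
    exact ⟨SimpleGraph.Walk.cons hadj p, by simp [hp]⟩

lemma dist_bip (hk : 2 ≤ k) (A B : OV k) (b c : Bool) :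
    (bipDouble (oddGraph k)).dist (A, b) (B, c) =
      if b = c then 2 * (k - 1 - (A.1 ∩ B.1).card) else 2 * (A.1 ∩ B.1).card + 1 := by
  have hicard := icard_le A B
  by_cases hbc : b = c
  · obtain ⟨pe, hpe⟩ := exists_even_walk hk (k - 1 - (A.1 ∩ B.1).card) A B (by omega)
    obtain ⟨p, hp⟩ := walk_up pe b c
      (iff_of_true hbc (by rw [hpe]; exact even_two_mul _))
    have hle := SimpleGraph.dist_le p
    obtain ⟨q, hq⟩ := (SimpleGraph.Walk.reachable p).exists_walk_length_eq_dist
    obtain ⟨q', hq', hparq⟩ := walk_down q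
    have heven : Even q.length := hparq.mp hbc
    have hlb : 2 * (k - 1) ≤ q'.length + 2 * (A.1 ∩ B.1).card :=
      (walk_lb hk q').1 (by rw [hq']; exact heven)
    rw [hq] at hq'
    simp only [if_pos hbc]
    omega
  · obtain ⟨po, hpo⟩ := exists_odd_walk hk A B
    obtain ⟨p, hp⟩ := walk_up po b c
      (iff_of_false hbc (by rw [hpo, Nat.even_add_one, not_not]; exact even_two_mul _))
    have hle := SimpleGraph.dist_le p
    obtain ⟨q, hq⟩ := (SimpleGraph.Walk.reachable p).exists_walk_length_eq_dist
    obtain ⟨q', hq', hparq⟩ := walk_down q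
    have hodd : Odd q.length := by
      rcases Nat.even_or_odd q.length with he | ho
      · exact absurd (hparq.mpr he) hbc
      · exact ho
    have hlb : 2 * (A.1 ∩ B.1).card + 1 ≤ q'.length :=
      (walk_lb hk q').2 (by rw [hq']; exact hodd)
    rw [hq] at hq'
    simp only [if_neg hbc]
    omega
def fv (hk : 2 ≤ k) (m : ℕ) : Fin (2 * k - 1) := ⟨m % (2 * k - 1), Nat.mod_lt _ (by omega)⟩

lemma fv_add_period (hk : 2 ≤ k) (m : ℕ) : fv hk (m + (2 * k - 1)) = fv hk m := by
  apply Fin.ext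
  simp [fv, Nat.add_mod_right]

lemma fv_val_of_lt (hk : 2 ≤ k) {m : ℕ} (h : m < 2 * k - 1) : (fv hk m).val = m :=
  Nat.mod_eq_of_lt h

def Afin (hk : 2 ≤ k) (j : ℕ) : Finset (Fin (2 * k - 1)) :=
  (range (k - 1)).image (fun t => fv hk (j + t))

lemma fv_inj (hk : 2 ≤ k) (j : ℕ) : ∀ t ∈ range (k - 1), ∀ t' ∈ range (k - 1),
    fv hk (j + t) = fv hk (j + t') → t = t' := by
  intro t ht t' ht' h
  rw [mem_range] at ht ht'
  have h2 : (j + t) % (2 * k - 1) = (j + t') % (2 * k - 1) := congrArg Fin.val h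
  have h3 : t ≡ t' [MOD 2 * k - 1] := Nat.ModEq.add_left_cancel' j h2
  have h4 : t % (2 * k - 1) = t' % (2 * k - 1) := h3
  rw [Nat.mod_eq_of_lt (by omega), Nat.mod_eq_of_lt (by omega)] at h4
  exact h4

lemma Afin_card (hk : 2 ≤ k) (j : ℕ) : (Afin hk j).card = k - 1 := by
  rw [Afin, card_image_of_injOn, card_range]
  intro t ht t' ht' h
  exact fv_inj hk j t ht t' ht' h

lemma key (hk : 2 ≤ k) (B C : Finset (Fin (2 * k - 1))) (hB : B.card = k - 1)
    (hC : C.card = k - 1)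
    (h : ∀ j, j < 2 * k - 2 → (Afin hk j ∩ B).card = (Afin hk j ∩ C).card) : B = C := by
  set v : Fin (2 * k - 1) → ℤ :=
    fun x => (if x ∈ B then 1 else 0) - (if x ∈ C then 1 else 0) with hv
  have hsum : ∀ (j : ℕ) (D : Finset (Fin (2 * k - 1))), ((Afin hk j ∩ D).card : ℤ) =
      ∑ t ∈ range (k - 1), (if fv hk (j + t) ∈ D then (1 : ℤ) else 0) := by
    intro j D
    have h1 : Afin hk j ∩ D = (Afin hk j).filter (· ∈ D) := by
      rw [filter_mem_eq_inter]
    rw [h1, card_filter, Afin, Finset.sum_image (fv_inj hk j)]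
    push_cast
    rfl
  have hF : ∀ j, j < 2 * k - 2 → ∑ t ∈ range (k - 1), v (fv hk (j + t)) = 0 := by
    intro j hj
    have hBC := h j hj
    have hb := hsum j B
    have hc := hsum j C
    simp only [hv, Finset.sum_sub_distrib]
    rw [← hb, ← hc, hBC]
    ring
  have R1 : ∀ j, j + 3 ≤ 2 * k - 1 → v (fv hk (j + (k - 1))) = v (fv hk j) := by
    intro j hj
    have h0 := hF j (by omega)
    have h1 := hF (j + 1) (by omega)
    have hshift : ∑ t ∈ range (k - 1), v (fv hk (j + 1 + t))
        = ∑ t ∈ range (k - 1), v (fv hk (j + (t + 1))) := by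
      apply Finset.sum_congr rfl
      intro t _
      congr 2
      omega
    rw [hshift] at h1
    have e1 := Finset.sum_range_succ' (fun t => v (fv hk (j + t))) (k - 1)
    have e2 := Finset.sum_range_succ (fun t => v (fv hk (j + t))) (k - 1)
    simp only [add_zero] at e1
    rw [e1, h1] at e2
    rw [h0] at e2
    linarith [e2]
  have pred1 : ∀ j, 1 ≤ j → j ≤ k - 3 → v (fv hk j) = v (fv hk (j - 1)) := by
    intro j h1 h3
    have e1 := R1 j (by omega)
    have e2 := R1 (j + (k - 1)) (by omega)
    have e3 : fv hk (j + (k - 1) + (k - 1)) = fv hk (j - 1) := by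
      have heq : j + (k - 1) + (k - 1) = (j - 1) + (2 * k - 1) := by omega
      rw [heq, fv_add_period]
    rw [e3] at e2
    exact e1.symm.trans e2.symm
  have c1 : ∀ j, j ≤ k - 3 → v (fv hk j) = v (fv hk 0) := by
    intro j
    induction j with
    | zero => intro _; rfl
    | succ i ih =>
      intro hle
      have hstep : v (fv hk (i + 1)) = v (fv hk i) := by
        simpa using pred1 (i + 1) (by omega) (by omega)
      rw [hstep]
      exact ih (by omega)
  have pred2 : ∀ j, k ≤ j → j ≤ 2 * k - 4 → v (fv hk j) = v (fv hk (j - 1)) := by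
    intro j h1 h2
    have e1 := R1 j (by omega)
    have e3 : fv hk (j + (k - 1)) = fv hk (j - k) := by
      have heq : j + (k - 1) = (j - k) + (2 * k - 1) := by omega
      rw [heq, fv_add_period]
    have e2 := R1 (j - k) (by omega)
    have e4 : j - k + (k - 1) = j - 1 := by omega
    rw [e4] at e2
    rw [e3] at e1
    exact (e2.trans e1).symm
  have c2 : ∀ d, k - 1 + d ≤ 2 * k - 4 → v (fv hk (k - 1 + d)) = v (fv hk (k - 1)) := by
    intro d
    induction d with
    | zero => intro _; rfl
    | succ i ih =>
      intro hle
      have hstep : v (fv hk (k - 1 + (i + 1))) = v (fv hk (k - 1 + i)) := by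
        have := pred2 (k - 1 + (i + 1)) (by omega) (by omega)
        have he : k - 1 + (i + 1) - 1 = k - 1 + i := by omega
        rw [he] at this
        exact this
      rw [hstep]
      exact ih (by omega)
  have join1 : v (fv hk (k - 1)) = v (fv hk 0) := by
    simpa using R1 0 (by omega)
  have arel : v (fv hk (2 * k - 3)) = v (fv hk (k - 2)) := by
    have := R1 (k - 2) (by omega)
    have e : k - 2 + (k - 1) = 2 * k - 3 := by omega
    rw [e] at this
    exact this
  have join2 : 3 ≤ k → v (fv hk (2 * k - 2)) = v (fv hk (k - 1)) := by
    intro h3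
    have := R1 (k - 1) (by omega)
    have e : k - 1 + (k - 1) = 2 * k - 2 := by omega
    rw [e] at this
    exact this
  set a := v (fv hk (k - 2)) with ha
  set b := v (fv hk (2 * k - 2)) with hbdef
  have hval : ∀ x : Fin (2 * k - 1),
      v x = if (x.val = k - 2 ∨ x.val = 2 * k - 3) then a else b := by
    intro x
    by_cases h1 : x.val = k - 2
    · rw [if_pos (Or.inl h1)]
      have hxe : x = fv hk (k - 2) :=
        Fin.ext (by rw [fv_val_of_lt hk (by omega)]; exact h1)
      rw [hxe]
    · by_cases h2 : x.val = 2 * k - 3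
      · rw [if_pos (Or.inr h2)]
        have hxe : x = fv hk (2 * k - 3) :=
          Fin.ext (by rw [fv_val_of_lt hk (by omega)]; exact h2)
        rw [hxe]
        exact arel
      · rw [if_neg (by tauto)]
        by_cases h3 : x.val = 2 * k - 2
        · have hxe : x = fv hk (2 * k - 2) :=
            Fin.ext (by rw [fv_val_of_lt hk (by omega)]; exact h3)
          rw [hxe]
        · have hxe : x = fv hk x.val := (Fin.ext (Nat.mod_eq_of_lt x.isLt) : fv hk x.val = x).symm
          have hlt : x.val ≤ 2 * k - 4 := by
            have := x.isLt
            omega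
          by_cases h4 : x.val ≤ k - 3
          · have hk3 : 3 ≤ k := by omega
            rw [hxe, c1 x.val h4, ← join1, ← join2 hk3]
          · have h5 : k - 1 ≤ x.val := by omega
            have hk3 : 3 ≤ k := by omega
            obtain ⟨d, hd⟩ : ∃ d, x.val = k - 1 + d := ⟨x.val - (k - 1), by omega⟩
            rw [hxe, hd, c2 d (by omega), ← join2 hk3]
  have hsumv : ∑ x : Fin (2 * k - 1), v x = 0 := by
    have hB' : ∑ x : Fin (2 * k - 1), (if x ∈ B then (1 : ℤ) else 0) = B.card := by
      rw [Finset.sum_ite_mem, Finset.univ_inter, Finset.sum_const, nsmul_eq_mul, mul_one]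
    have hC' : ∑ x : Fin (2 * k - 1), (if x ∈ C then (1 : ℤ) else 0) = C.card := by
      rw [Finset.sum_ite_mem, Finset.univ_inter, Finset.sum_const, nsmul_eq_mul, mul_one]
    simp only [hv, Finset.sum_sub_distrib, hB', hC', hB, hC]
    ring
  have hPcard : (Finset.univ.filter
      (fun x : Fin (2 * k - 1) => x.val = k - 2 ∨ x.val = 2 * k - 3)).card = 2 := by
    have hset : Finset.univ.filter
        (fun x : Fin (2 * k - 1) => x.val = k - 2 ∨ x.val = 2 * k - 3)
        = {fv hk (k - 2), fv hk (2 * k - 3)} := by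
      ext x
      simp only [mem_filter, mem_univ, true_and, mem_insert, mem_singleton]
      rw [Fin.ext_iff, Fin.ext_iff, fv_val_of_lt hk (by omega), fv_val_of_lt hk (by omega)]
    rw [hset, card_insert_of_notMem, card_singleton]
    simp only [mem_singleton]
    intro hc
    have := congrArg Fin.val hc
    rw [fv_val_of_lt hk (by omega), fv_val_of_lt hk (by omega)] at this
    omega
  have heq1 : 2 * a + ((2 * k - 3 : ℕ) : ℤ) * b = 0 := by
    have hs := hsumv
    rw [Finset.sum_congr rfl (fun x _ => hval x)] at hs
    rw [Finset.sum_ite, Finset.sum_const, Finset.sum_const, hPcard] at hs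
    have hQcard : (Finset.univ.filter
        (fun x : Fin (2 * k - 1) => ¬(x.val = k - 2 ∨ x.val = 2 * k - 3))).card
        = 2 * k - 3 := by
      have hTot := Finset.card_filter_add_card_filter_not
        (s := (Finset.univ : Finset (Fin (2 * k - 1))))
        (p := fun x : Fin (2 * k - 1) => x.val = k - 2 ∨ x.val = 2 * k - 3)
      rw [hPcard, Finset.card_univ, Fintype.card_fin] at hTot
      omega
    rw [hQcard] at hs
    simp only [nsmul_eq_mul] at hs
    push_cast at hs ⊢
    linarith
  have heq2 : a + ((k - 2 : ℕ) : ℤ) * b = 0 := by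
    have hs := hF 0 (by omega)
    simp only [zero_add] at hs
    have hsplit : k - 1 = (k - 2) + 1 := by omega
    rw [hsplit, Finset.sum_range_succ] at hs
    have hinner : ∑ t ∈ range (k - 2), v (fv hk t) = ∑ t ∈ range (k - 2), b := by
      apply Finset.sum_congr rfl
      intro t ht
      rw [mem_range] at ht
      have hvt := hval (fv hk t)
      rw [fv_val_of_lt hk (by omega)] at hvt
      rw [hvt, if_neg (by omega)]
    rw [hinner, Finset.sum_const, nsmul_eq_mul, Finset.card_range] at hs
    have hva : v (fv hk (k - 2)) = a := rfl
    rw [hva] at hs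
    linarith
  have hcast : ((2 * k - 3 : ℕ) : ℤ) = 2 * ((k - 2 : ℕ) : ℤ) + 1 := by
    omega
  rw [hcast] at heq1
  have hb0 : b = 0 := by linarith
  have ha0 : a = 0 := by
    rw [hb0] at heq2
    linarith
  apply Finset.ext
  intro x
  have hvx : v x = 0 := by
    rw [hval x, hb0, ha0]
    split <;> rfl
  simp only [hv] at hvx
  by_cases hxB : x ∈ B <;> by_cases hxC : x ∈ C <;> simp [hxB, hxC] at hvx ⊢
def IRes (R : Set (OV k)) : Prop :=
  ∀ B C : OV k, B ≠ C → ∃ A ∈ R, (B.1 ∩ A.1).card ≠ (C.1 ∩ A.1).card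

lemma res_iff (hk : 2 ≤ k) (R : Set (OV k)) :
    IsResolving (oddGraph k) R ↔ IRes R := by
  constructor
  · intro hres B C hBC
    obtain ⟨A, hA, hdist⟩ := hres B C hBC
    refine ⟨A, hA, fun hic => hdist ?_⟩
    rw [dist_odd hk B A, dist_odd hk C A, hic]
  · intro hres B C hBC
    obtain ⟨A, hA, hic⟩ := hres B C hBC
    refine ⟨A, hA, fun hdist => hic ?_⟩
    rw [dist_odd hk B A, dist_odd hk C A] at hdist
    have h1 := icard_le B A
    have h2 := icard_le C A
    omega

lemma resD_iff (hk : 2 ≤ k) (R' : Set (OV k × Bool)) :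
    IsResolving (bipDouble (oddGraph k)) R' ↔ IRes (Prod.fst '' R') := by
  constructor
  · intro hres B C hBC
    obtain ⟨w, hw, hdist⟩ := hres (B, true) (C, true)
      (fun hc => hBC (congrArg Prod.fst hc))
    refine ⟨w.1, ⟨w, hw, rfl⟩, fun hic => hdist ?_⟩
    have hw' : w = (w.1, w.2) := rfl
    rw [hw', dist_bip hk B w.1 true w.2, dist_bip hk C w.1 true w.2, hic]
  · intro hres u w huw
    obtain ⟨B, δ⟩ := u
    obtain ⟨C, δ'⟩ := w
    by_cases hδ : δ = δ'
    · subst hδ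
      have hBC : B ≠ C := fun hc => huw (by rw [hc])
      obtain ⟨A, ⟨z, hz, hz1⟩, hic⟩ := hres B C hBC
      refine ⟨z, hz, ?_⟩
      have hz' : z = (A, z.2) := by rw [← hz1]
      rw [hz', dist_bip hk B A δ z.2, dist_bip hk C A δ z.2]
      have h1 := icard_le B A
      have h2 := icard_le C A
      by_cases hcase : δ = z.2
      · rw [if_pos hcase, if_pos hcase]
        omega
      · rw [if_neg hcase, if_neg hcase]
        omega
    · -- opposite signs: any landmark works
      have hpair : ∃ B₀ C₀ : OV k, B₀ ≠ C₀ := by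
        refine ⟨⟨Afin hk 0, Afin_card hk 0⟩, ⟨Afin hk 1, Afin_card hk 1⟩, ?_⟩
        intro hc
        have hmem : fv hk 0 ∈ Afin hk 0 := by
          rw [Afin]
          exact Finset.mem_image.mpr ⟨0, Finset.mem_range.mpr (by omega), rfl⟩
        rw [Subtype.mk.injEq] at hc
        rw [hc, Afin] at hmem
        obtain ⟨t, ht, hteq⟩ := Finset.mem_image.mp hmem
        rw [Finset.mem_range] at ht
        have := congrArg Fin.val hteq
        rw [fv_val_of_lt hk (by omega), fv_val_of_lt hk (by omega)] at this
        omega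
      obtain ⟨B₀, C₀, hB₀C₀⟩ := hpair
      obtain ⟨A, ⟨z, hz, hz1⟩, _⟩ := hres B₀ C₀ hB₀C₀
      obtain ⟨zA, ε⟩ := z
      obtain rfl : zA = A := hz1
      refine ⟨(zA, ε), hz, ?_⟩
      rw [dist_bip hk B zA δ ε, dist_bip hk C zA δ' ε]
      have h1 := icard_le B zA
      have h2 := icard_le C zA
      by_cases hcase : δ = ε
      · rw [if_pos hcase, if_neg (fun hc : δ' = ε => hδ (hcase.trans hc.symm))]
        omega
      · have hδ'ε : δ' = ε := by
          cases δ <;> cases δ' <;> cases ε <;> simp_all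
        rw [if_neg hcase, if_pos hδ'ε]
        omega

lemma fam_resolving (hk : 2 ≤ k) :
    IsResolving (oddGraph k)
      ((fun j => (⟨Afin hk j, Afin_card hk j⟩ : OV k)) '' Set.Iio (2 * k - 2)) := by
  rw [res_iff hk]
  intro B C hBC
  by_contra hcon
  push_neg at hcon
  apply hBC
  apply Subtype.ext
  apply key hk B.1 C.1 B.2 C.2
  intro j hj
  have := hcon ⟨Afin hk j, Afin_card hk j⟩ ⟨j, hj, rfl⟩
  rw [inter_comm B.1 _, inter_comm C.1 _] at this
  exact this

end OddAux

/-- For `k ≥ 2`, the Odd graph `O_k` and the doubled Odd graph `D(O_k)` have equal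
metric dimension, which is at most `2k - 2`. -/
theorem stmt11 (k : ℕ) (hk : 2 ≤ k) :
    metricDim (oddGraph k) = metricDim (bipDouble (oddGraph k)) ∧
      metricDim (oddGraph k) ≤ 2 * k - 2 := by
  classical
  set SO := {n | ∃ R : Set (OddAux.OV k), IsResolving (oddGraph k) R ∧ R.ncard = n} with hSO
  set SD := {n | ∃ R : Set (OddAux.OV k × Bool),
    IsResolving (bipDouble (oddGraph k)) R ∧ R.ncard = n} with hSD
  set Rfam : Set (OddAux.OV k) :=
    (fun j => (⟨OddAux.Afin hk j, OddAux.Afin_card hk j⟩ : OddAux.OV k)) '' Set.Iio (2 * k - 2)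
    with hRfam
  have hfam : IsResolving (oddGraph k) Rfam := OddAux.fam_resolving hk
  -- transfer O -> D
  have transferOD : ∀ R : Set (OddAux.OV k), IsResolving (oddGraph k) R →
      IsResolving (bipDouble (oddGraph k)) ((fun A => (A, true)) '' R) := by
    intro R hR
    rw [OddAux.resD_iff hk]
    have himg : Prod.fst '' ((fun A => (A, true)) '' R) = R := by
      rw [Set.image_image]
      simp
    rw [himg]
    exact (OddAux.res_iff hk R).mp hR
  have hSOne : SO.Nonempty := ⟨Rfam.ncard, Rfam, hfam, rfl⟩
  have hSDne : SD.Nonempty :=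
    ⟨((fun A => (A, true)) '' Rfam).ncard, _, transferOD Rfam hfam, rfl⟩
  have hle1 : metricDim (oddGraph k) ≤ metricDim (bipDouble (oddGraph k)) := by
    have hmem := Nat.sInf_mem hSDne
    obtain ⟨R', hres', hcard'⟩ := hmem
    have hres : IsResolving (oddGraph k) (Prod.fst '' R') :=
      (OddAux.res_iff hk _).mpr ((OddAux.resD_iff hk R').mp hres')
    calc metricDim (oddGraph k) ≤ (Prod.fst '' R').ncard :=
          Nat.sInf_le ⟨Prod.fst '' R', hres, rfl⟩
    _ ≤ R'.ncard := Set.ncard_image_le R'.toFinite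
    _ = metricDim (bipDouble (oddGraph k)) := hcard'
  have hle2 : metricDim (bipDouble (oddGraph k)) ≤ metricDim (oddGraph k) := by
    have hmem := Nat.sInf_mem hSOne
    obtain ⟨R, hres, hcard⟩ := hmem
    have hinj : Function.Injective (fun A : OddAux.OV k => (A, true)) := by
      intro x y hxy
      exact congrArg Prod.fst hxy
    calc metricDim (bipDouble (oddGraph k)) ≤ ((fun A => (A, true)) '' R).ncard :=
          Nat.sInf_le ⟨(fun A => (A, true)) '' R, transferOD R hres, rfl⟩
    _ = R.ncard := Set.ncard_image_of_injective R hinj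
    _ = metricDim (oddGraph k) := hcard
  refine ⟨le_antisymm hle1 hle2, ?_⟩
  have hb : metricDim (oddGraph k) ≤ Rfam.ncard := Nat.sInf_le ⟨Rfam, hfam, rfl⟩
  have hcardfam : Rfam.ncard ≤ 2 * k - 2 := by
    calc Rfam.ncard ≤ (Set.Iio (2 * k - 2)).ncard := Set.ncard_image_le (Set.finite_Iio _)
    _ = 2 * k - 2 := by rw [← Finset.coe_Iio, Set.ncard_coe_finset, Nat.card_Iio]
  omega
end

section
/- Let Π = (P, L) be a projective plane, let S ⊆ P be a double blocking set (every line of Π contains at least two points of S), and let x₀ ∈ S. Then S ∖ {x₀} is a semi-resolving set for the lines of Π: for any two distinct lines L₁, L₂ ∈ L there exists a point y ∈ S ∖ {x₀} that is incident with exactly one of L₁ and L₂. -/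
lemma aux15 {P L : Type*} [Membership P L] [Configuration.ProjectivePlane P L]
    (S : Set P)
    (hS : ∀ l : L, ∃ x ∈ S, ∃ y ∈ S, x ≠ y ∧ x ∈ l ∧ y ∈ l)
    {l₁ l₂ : L} (h : l₁ ≠ l₂) :
    ∃ a ∈ S, a ∈ l₁ ∧ a ∉ l₂ := by
  obtain ⟨x, hxS, y, hyS, hxy, hx1, hy1⟩ := hS l₁
  by_cases hx2 : x ∈ l₂
  · by_cases hy2 : y ∈ l₂
    · exact absurd (Configuration.Nondegenerate.eq_or_eq hx1 hy1 hx2 hy2)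
        (by simp [hxy, h])
    · exact ⟨y, hyS, hy1, hy2⟩
  · exact ⟨x, hxS, hx1, hx2⟩

/-- in a projective plane, a double blocking set with one point removed
is a semi-resolving set for the lines: any two distinct lines are distinguished by a
remaining point lying on exactly one of them. -/
theorem stmt15 {P L : Type*} [Membership P L] [Configuration.ProjectivePlane P L]
    (S : Set P)
    (hS : ∀ l : L, ∃ x ∈ S, ∃ y ∈ S, x ≠ y ∧ x ∈ l ∧ y ∈ l)
    (x₀ : P) (hx₀ : x₀ ∈ S) :
    ∀ l₁ l₂ : L, l₁ ≠ l₂ →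
      ∃ y ∈ S \ {x₀}, (y ∈ l₁ ∧ y ∉ l₂) ∨ (y ∈ l₂ ∧ y ∉ l₁) := by
  intro l₁ l₂ h
  obtain ⟨a, haS, ha1, ha2⟩ := aux15 S hS h
  obtain ⟨b, hbS, hb2, hb1⟩ := aux15 S hS h.symm
  by_cases hax : a = x₀
  · refine ⟨b, ⟨hbS, ?_⟩, Or.inr ⟨hb2, hb1⟩⟩
    simp only [Set.mem_singleton_iff]
    rintro rfl; exact hb1 (hax ▸ ha1)
  · exact ⟨a, ⟨haS, hax⟩, Or.inl ⟨ha1, ha2⟩⟩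
end

section
/- Let Δ be a strongly regular graph with parameters (v, k, λ, λ) (i.e., with equal parameters λ = μ), where λ ≥ 1 and 2 ≤ k ≤ v − 2. Then its bipartite double D(Δ), which is the incidence graph of a symmetric (v, k, λ)-design admitting a null polarity, satisfies μ(D(Δ)) ≤ 2 μ(Δ). -/
open SimpleGraph

lemma bip_adj {V : Type*} (G : SimpleGraph V) (p q : V × Bool) :
    (bipDouble G).Adj p q ↔ p.2 ≠ q.2 ∧ G.Adj p.1 q.1 := by
  constructor
  · rintro ⟨hne, h | h⟩
    · exact h
    · exact ⟨h.1.symm, h.2.symm⟩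
  · rintro ⟨h1, h2⟩
    exact ⟨fun h => h1 (by rw [h]), Or.inl ⟨h1, h2⟩⟩

lemma bip_walk_parity {V : Type*} (G : SimpleGraph V) :
    ∀ {p q : V × Bool} (w : (bipDouble G).Walk p q), (p.2 = q.2 ↔ Even w.length) := by
  intro p q w
  induction w with
  | nil => simp
  | @cons a c b h w ih =>
    have hb := ((bip_adj G _ _).mp h).1
    rw [SimpleGraph.Walk.length_cons, Nat.even_add_one, ← ih]
    revert hb ih
    cases a.2 <;> cases c.2 <;> cases b.2 <;> simp

/-- if `Δ` is a strongly regular graph with parameters `(v, k, λ, λ)`,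
where `λ ≥ 1` and `2 ≤ k ≤ v − 2`, then its bipartite double `D(Δ)` satisfies
`μ(D(Δ)) ≤ 2 μ(Δ)`. -/
theorem stmt17 {V : Type*} [Fintype V] (Δ : SimpleGraph V) [DecidableRel Δ.Adj] (v k lam : ℕ)
    (hsrg : Δ.IsSRGWith v k lam lam) (hlam : 1 ≤ lam) (hk : 2 ≤ k)
    (hkv : k + 2 ≤ v) :
    metricDim (bipDouble Δ) ≤ 2 * metricDim Δ := by
  classical
  set D := bipDouble Δ with hD
  have hcardV : Fintype.card V = v := hsrg.card
  have hVlt : 1 < Fintype.card V := by omega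
  have hcommon : ∀ u w : V, u ≠ w → (Δ.commonNeighbors u w).Nonempty := by
    intro u w huw
    rw [← Set.nonempty_coe_sort, ← Fintype.card_pos_iff]
    by_cases h : Δ.Adj u w
    · rw [hsrg.of_adj u w h]; omega
    · rw [hsrg.of_not_adj huw h]; omega
  have hcommonAdj : ∀ u w : V, Δ.Adj u w → (Δ.commonNeighbors u w).Nonempty := by
    intro u w h
    rw [← Set.nonempty_coe_sort, ← Fintype.card_pos_iff, hsrg.of_adj u w h]; omega
  have hnbr : ∀ u : V, ∃ a, Δ.Adj u a := by
    intro u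
    rw [← SimpleGraph.degree_pos_iff_exists_adj, hsrg.regular u]; omega
  have hDadj : ∀ (a b : V × Bool), D.Adj a b ↔ a.2 ≠ b.2 ∧ Δ.Adj a.1 b.1 := bip_adj Δ
  -- distance lemmas for D
  have dOppAdj : ∀ (u w : V) (b c : Bool), b ≠ c → Δ.Adj u w → D.dist (u, b) (w, c) = 1 := by
    intro u w b c hbc h
    exact SimpleGraph.dist_eq_one_iff_adj.mpr ((hDadj _ _).mpr ⟨hbc, h⟩)
  have dSame : ∀ (u w : V) (b : Bool), u ≠ w → D.dist (u, b) (w, b) = 2 := by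
    intro u w b huw
    obtain ⟨x, hx⟩ := hcommon u w huw
    rw [SimpleGraph.mem_commonNeighbors] at hx
    have e1 : D.Adj (u, b) (x, !b) := (hDadj _ _).mpr ⟨by simp, hx.1⟩
    have e2 : D.Adj (x, !b) (w, b) := (hDadj _ _).mpr ⟨by simp, hx.2.symm⟩
    have hle := SimpleGraph.dist_le (SimpleGraph.Walk.cons e1
      (SimpleGraph.Walk.cons e2 SimpleGraph.Walk.nil))
    simp only [SimpleGraph.Walk.length_cons, SimpleGraph.Walk.length_nil] at hle
    have hne0 : D.dist (u, b) (w, b) ≠ 0 := by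
      intro h0
      rcases SimpleGraph.dist_eq_zero_iff_eq_or_not_reachable.mp h0 with h | h
      · exact huw (Prod.ext_iff.mp h).1
      · exact h ⟨SimpleGraph.Walk.cons e1 (SimpleGraph.Walk.cons e2 SimpleGraph.Walk.nil)⟩
    have hne1 : D.dist (u, b) (w, b) ≠ 1 := by
      intro h1
      have := (hDadj _ _).mp (SimpleGraph.dist_eq_one_iff_adj.mp h1)
      exact this.1 rfl
    omega
  have dOppNot : ∀ (u w : V) (b c : Bool), b ≠ c → ¬Δ.Adj u w → D.dist (u, b) (w, c) = 3 := by
    intro u w b c hbc hnadj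
    have hwalk : ∃ x y : V, Δ.Adj u x ∧ Δ.Adj x y ∧ Δ.Adj y w := by
      by_cases huw : u = w
      · subst huw
        obtain ⟨a, ha⟩ := hnbr u
        obtain ⟨t, ht⟩ := hcommonAdj u a ha
        rw [SimpleGraph.mem_commonNeighbors] at ht
        exact ⟨a, t, ha, ht.2, ht.1.symm⟩
      · obtain ⟨x, hx⟩ := hcommon u w huw
        rw [SimpleGraph.mem_commonNeighbors] at hx
        obtain ⟨y, hy⟩ := hcommonAdj x w hx.2.symm
        rw [SimpleGraph.mem_commonNeighbors] at hy
        exact ⟨x, y, hx.1, hy.1, hy.2.symm⟩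
    obtain ⟨x, y, h1, h2, h3⟩ := hwalk
    have e1 : D.Adj (u, b) (x, c) := (hDadj _ _).mpr ⟨hbc, h1⟩
    have e2 : D.Adj (x, c) (y, b) := (hDadj _ _).mpr ⟨fun h => hbc h.symm, h2⟩
    have e3 : D.Adj (y, b) (w, c) := (hDadj _ _).mpr ⟨hbc, h3⟩
    have hle := SimpleGraph.dist_le (SimpleGraph.Walk.cons e1
      (SimpleGraph.Walk.cons e2 (SimpleGraph.Walk.cons e3 SimpleGraph.Walk.nil)))
    simp only [SimpleGraph.Walk.length_cons, SimpleGraph.Walk.length_nil] at hle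
    have hreach : D.Reachable (u, b) (w, c) := ⟨SimpleGraph.Walk.cons e1
      (SimpleGraph.Walk.cons e2 (SimpleGraph.Walk.cons e3 SimpleGraph.Walk.nil))⟩
    obtain ⟨pw, hpw⟩ := hreach.exists_walk_length_eq_dist
    have hodd : (b = c ↔ Even pw.length) := bip_walk_parity Δ pw
    rw [hpw] at hodd
    have hnotEven : ¬ Even (D.dist (u, b) (w, c)) := fun he => hbc (hodd.mpr he)
    have hne1 : D.dist (u, b) (w, c) ≠ 1 := by
      intro h1
      have := (hDadj _ _).mp (SimpleGraph.dist_eq_one_iff_adj.mp h1)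
      exact hnadj this.2
    rw [Nat.not_even_iff] at hnotEven
    omega
  -- distance lemmas for Δ
  have dΔ2 : ∀ u w : V, u ≠ w → ¬Δ.Adj u w → Δ.dist u w = 2 := by
    intro u w huw hnadj
    obtain ⟨x, hx⟩ := hcommon u w huw
    rw [SimpleGraph.mem_commonNeighbors] at hx
    have hle := SimpleGraph.dist_le (SimpleGraph.Walk.cons hx.1
      (SimpleGraph.Walk.cons hx.2.symm SimpleGraph.Walk.nil))
    simp only [SimpleGraph.Walk.length_cons, SimpleGraph.Walk.length_nil] at hle
    have hne0 : Δ.dist u w ≠ 0 := by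
      intro h0
      rcases SimpleGraph.dist_eq_zero_iff_eq_or_not_reachable.mp h0 with h | h
      · exact huw h
      · exact h ⟨SimpleGraph.Walk.cons hx.1
          (SimpleGraph.Walk.cons hx.2.symm SimpleGraph.Walk.nil)⟩
    have hne1 : Δ.dist u w ≠ 1 := fun h => hnadj (SimpleGraph.dist_eq_one_iff_adj.mp h)
    omega
  have dΔpos : ∀ u w : V, u ≠ w → Δ.dist u w ≠ 0 := by
    intro u w huw
    by_cases h : Δ.Adj u w
    · have := SimpleGraph.dist_eq_one_iff_adj.mpr h; omega
    · have := dΔ2 u w huw h; omega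
  -- a minimum resolving set for Δ
  have huniv : IsResolving Δ Set.univ := by
    intro u w huw
    refine ⟨u, Set.mem_univ u, ?_⟩
    rw [SimpleGraph.dist_self]
    exact (dΔpos w u (Ne.symm huw)).symm
  have hS : {n | ∃ R : Set V, IsResolving Δ R ∧ R.ncard = n}.Nonempty :=
    ⟨_, Set.univ, huniv, rfl⟩
  obtain ⟨R, hR, hRcard⟩ := Nat.sInf_mem hS
  obtain ⟨a0, b0, hab⟩ := Fintype.exists_pair_of_one_lt_card hVlt
  obtain ⟨r0, hr0, _⟩ := hR a0 b0 hab
  set R' : Set (V × Bool) := (fun u => (u, true)) '' R ∪ (fun u => (u, false)) '' R with hR'def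
  have hmemR' : ∀ r ∈ R, ∀ b : Bool, (r, b) ∈ R' := by
    intro r hr b
    cases b
    · exact Or.inr ⟨r, hr, rfl⟩
    · exact Or.inl ⟨r, hr, rfl⟩
  have hres' : IsResolving D R' := by
    rintro ⟨u, b⟩ ⟨w, c⟩ hne
    by_cases hbc : b = c
    · subst hbc
      have huw : u ≠ w := fun h => hne (by rw [h])
      obtain ⟨r, hr, hdr⟩ := hR u w huw
      by_cases hur : u = r
      · refine ⟨(u, b), hmemR' u (hur ▸ hr) b, ?_⟩
        rw [SimpleGraph.dist_self, dSame w u b (Ne.symm huw)]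
        omega
      · by_cases hwr : w = r
        · refine ⟨(w, b), hmemR' w (hwr ▸ hr) b, ?_⟩
          rw [dSame u w b huw, SimpleGraph.dist_self]
          omega
        · by_cases hadj : Δ.Adj u r
          · by_cases hadj' : Δ.Adj w r
            · exact absurd (by rw [SimpleGraph.dist_eq_one_iff_adj.mpr hadj,
                SimpleGraph.dist_eq_one_iff_adj.mpr hadj']) hdr
            · refine ⟨(r, !b), hmemR' r hr (!b), ?_⟩
              rw [dOppAdj u r b (!b) (by simp) hadj, dOppNot w r b (!b) (by simp) hadj']
              omega
          · by_cases hadj' : Δ.Adj w r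
            · refine ⟨(r, !b), hmemR' r hr (!b), ?_⟩
              rw [dOppNot u r b (!b) (by simp) hadj, dOppAdj w r b (!b) (by simp) hadj']
              omega
            · exact absurd (by rw [dΔ2 u r hur hadj, dΔ2 w r hwr hadj']) hdr
    · refine ⟨(r0, b), hmemR' r0 hr0 b, ?_⟩
      have hcb : c ≠ b := fun h => hbc h.symm
      have h1 : D.dist (u, b) (r0, b) = 0 ∨ D.dist (u, b) (r0, b) = 2 := by
        by_cases hur : u = r0
        · left; rw [hur, SimpleGraph.dist_self]
        · right; exact dSame u r0 b hur
      have h2 : D.dist (w, c) (r0, b) = 1 ∨ D.dist (w, c) (r0, b) = 3 := by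
        by_cases hadj : Δ.Adj w r0
        · left; exact dOppAdj w r0 c b hcb hadj
        · right; exact dOppNot w r0 c b hcb hadj
      omega
  have hfin : R.Finite := Set.toFinite R
  have hcard' : R'.ncard ≤ 2 * R.ncard := by
    calc R'.ncard ≤ ((fun u => (u, true)) '' R).ncard + ((fun u => (u, false)) '' R).ncard :=
          Set.ncard_union_le _ _
      _ ≤ R.ncard + R.ncard := Nat.add_le_add (Set.ncard_image_le hfin) (Set.ncard_image_le hfin)
      _ = 2 * R.ncard := by ring
  have hmdD : metricDim D ≤ R'.ncard := Nat.sInf_le ⟨R', hres', rfl⟩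
  have hmd : metricDim Δ = R.ncard := hRcard.symm
  calc metricDim D ≤ R'.ncard := hmdD
    _ ≤ 2 * R.ncard := hcard'
    _ = 2 * metricDim Δ := by rw [hmd]
end
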